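/- arXiv:2205.06043 — 8 statements merged into one kernel-verified Lean document; each statement's English description precedes it below -/
import Mathlib

section
/- Let X be a complete operator system in a unital C*-algebra A and let L : X → [0,∞] be a Lipschitz seminorm. Suppose that for every ε > 0 there exist a complete operator system X_ε in a unital C*-algebra A_ε, a function L_ε : X_ε → [0,∞] satisfying L_ε(x+y) ≤ L_ε(x)+L_ε(y) and L_ε(λx) = |λ|·L_ε(x), and linear maps Φ_ε : X → X_ε and Ψ_ε : X_ε → X such that: (1) the kernel {y : L_ε(y)=0} is norm-closed and the image of {y ∈ X_ε : L_ε(y) ≤ 1} under the quotient map X_ε → X_ε/ker(L_ε) is totally bounded for the quotient norm; (2) Ψ_ε(ker L_ε) ⊆ ℂ·1; (3) there is a constant C > 0 with L_ε(Φ_ε(x)) ≤ C·L(x) for all x ∈ X and ‖Ψ_ε(y)‖ ≤ C·‖y‖ for all y ∈ X_ε; (4) ‖Ψ_ε(Φ_ε(x)) − x‖ ≤ ε·L(x) for all x ∈ X. Then the image of {x ∈ X : L(x) ≤ 1} under the quotient map X → X/ℂ·1 is totally bounded for the quotient norm (i.e., by Rieffel's criterion, (X,L) is a compact quantum metric space).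 -/
/-!
Given `r > 0`, take `ε = r / 2`. If `L x ≤ 1` then `C⁻¹ Φ x` lies in the `Lε`-unit ball, so it is
within `r / (2 C²)` of `z + v` with `z` in a finite net and `Lε v = 0`. The map `C Ψ` has norm at
most `C²` and sends `v` into `ℂ·1`, and `C Ψ (C⁻¹ Φ x) = Ψ (Φ x)` is within `r / 2` of `x`;
hence `x` is within `r` of `C Ψ z + ℂ·1`.
-/

open scoped ENNReal

universe u v

/-- A bundled unital C*-algebra. -/
structure BundledCStarAlg : Type (v + 1) where
  carrier : Type v
  [inst : CStarAlgebra carrier]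

attribute [instance] BundledCStarAlg.inst

/-- `L : X → [0,∞]` is a Lipschitz seminorm on the operator system `X`:  it is subadditive
and absolutely homogeneous on `X`, its domain `{x ∈ X : L x < ∞}` is norm-dense in `X`, its
kernel contains the scalars `ℂ·1`, and it is invariant under the adjoint operation. -/
def IsLipschitzSeminormOn {A : Type*} [CStarAlgebra A] (X : Submodule ℂ A)
    (L : A → ℝ≥0∞) : Prop :=
  (∀ x ∈ X, ∀ y ∈ X, L (x + y) ≤ L x + L y) ∧
  (∀ (c : ℂ), ∀ x ∈ X, L (c • x) = (‖c‖₊ : ℝ≥0∞) * L x) ∧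
  (∀ x ∈ X, x ∈ closure {y : A | y ∈ X ∧ L y < ⊤}) ∧
  (∀ c : ℂ, L (c • (1 : A)) = 0) ∧
  (∀ x ∈ X, L (star x) = L x)

section NetModulo

variable {E G : Type*} [SeminormedAddCommGroup E] [SeminormedAddCommGroup G]

def IsNetModulo (F : Finset E) (S K : Set E) (r : ℝ) : Prop :=
  ∀ x ∈ S, ∃ y ∈ F, ∃ k ∈ K, ‖x - y - k‖ < r

namespace IsNetModulo

variable {F : Finset E} {S K : Set E} {r : ℝ}

theorem mono {K' : Set E} (h : IsNetModulo F S K r) (hK : K ⊆ K') :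
    IsNetModulo F S K' r := fun x hx =>
  let ⟨y, hy, k, hk, hxyk⟩ := h x hx
  ⟨y, hy, k, hK hk, hxyk⟩

theorem image [DecidableEq G] {𝓕 : Type*} [FunLike 𝓕 E G] [AddMonoidHomClass 𝓕 E G]
    (h : IsNetModulo F S K r) (f : 𝓕) {C : ℝ} (hC : 0 < C) (hf : ∀ x, ‖f x‖ ≤ C * ‖x‖) :
    IsNetModulo (F.image f) (f '' S) (f '' K) (C * r) := by
  rintro _ ⟨x, hx, rfl⟩
  obtain ⟨y, hy, k, hk, hxyk⟩ := h x hx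
  refine ⟨f y, Finset.mem_image_of_mem f hy, f k, Set.mem_image_of_mem f hk, ?_⟩
  calc ‖f x - f y - f k‖ = ‖f (x - y - k)‖ := by rw [map_sub, map_sub]
    _ ≤ C * ‖x - y - k‖ := hf _
    _ < C * r := by gcongr

theorem of_approx {T : Set E} {δ : ℝ} (h : IsNetModulo F S K r)
    (hT : ∀ x ∈ T, ∃ s ∈ S, ‖x - s‖ ≤ δ) : IsNetModulo F T K (δ + r) := by
  intro x hx
  obtain ⟨s, hs, hxs⟩ := hT x hx
  obtain ⟨y, hy, k, hk, hsyk⟩ := h s hs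
  refine ⟨y, hy, k, hk, ?_⟩
  calc ‖x - y - k‖ = ‖(x - s) + (s - y - k)‖ := by congr 1; abel
    _ ≤ ‖x - s‖ + ‖s - y - k‖ := norm_add_le _ _
    _ < δ + r := add_lt_add_of_le_of_lt hxs hsyk

end IsNetModulo

end NetModulo

theorem apply_inv_smul_le_one {𝕜 E : Type*} [RCLike 𝕜] [SMul 𝕜 E] {ℓ : E → ℝ≥0∞} {y : E}
    (hℓ : ∀ c : 𝕜, ℓ (c • y) = ‖c‖₊ * ℓ y) {C : ℝ} (hC : 0 < C) (hy : ℓ y ≤ ENNReal.ofReal C) :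
    ℓ ((C : 𝕜)⁻¹ • y) ≤ 1 := by
  have hnorm : (‖(C : 𝕜)⁻¹‖₊ : ℝ≥0∞) = ENNReal.ofReal C⁻¹ := by
    rw [← enorm_eq_nnnorm, ← ofReal_norm, norm_inv, RCLike.norm_ofReal, abs_of_pos hC]
  calc ℓ ((C : 𝕜)⁻¹ • y) = ENNReal.ofReal C⁻¹ * ℓ y := by rw [hℓ, hnorm]
    _ ≤ ENNReal.ofReal C⁻¹ * ENNReal.ofReal C := by gcongr
    _ = 1 := by
      rw [← ENNReal.ofReal_mul (inv_nonneg.2 hC.le), inv_mul_cancel₀ hC.ne', ENNReal.ofReal_one]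

namespace Submodule

variable {R B : Type*} [Ring R] [SeminormedAddCommGroup B] [Module R B] (Y : Submodule R B)

theorem exists_isNetModulo_subtype {F : Finset B} (hF : (F : Set B) ⊆ Y) {P Q : B → Prop} {r : ℝ}
    (h : ∀ y ∈ Y, P y → ∃ z ∈ F, ∃ v, v ∈ Y ∧ Q v ∧ ‖y - z - v‖ < r) :
    ∃ F' : Finset Y, IsNetModulo F' {y : Y | P y} {v : Y | Q v} r := by
  classical
  refine ⟨F.subtype (· ∈ Y), fun y hy => ?_⟩
  obtain ⟨z, hz, v, hvY, hv, hyzv⟩ := h y y.2 hy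
  exact ⟨⟨z, hF hz⟩, Finset.mem_subtype.2 hz, ⟨v, hvY⟩, hv, hyzv⟩

theorem exists_finset_of_isNetModulo [DecidableEq B] {F : Finset Y} {P : B → Prop} {ι : Type*}
    {κ : ι → B} {r : ℝ} (h : IsNetModulo F {x : Y | P x} {k : Y | ∃ i, (k : B) = κ i} r) :
    ∃ F' : Finset B, (F' : Set B) ⊆ Y ∧ ∀ x ∈ Y, P x → ∃ y ∈ F', ∃ i, ‖x - y - κ i‖ < r := by
  refine ⟨F.image (↑), ?_, fun x hxY hx => ?_⟩
  · rw [Finset.coe_image]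
    exact Set.image_subset_iff.2 fun y _ => y.2
  obtain ⟨y, hy, k, ⟨i, hki⟩, hxyk⟩ := h ⟨x, hxY⟩ hx
  exact ⟨y, Finset.mem_image_of_mem _ hy, i, hki ▸ hxyk⟩

end Submodule

theorem statement0_general {A : Type u} [CStarAlgebra A] (X : Submodule ℂ A)
    (L : A → ℝ≥0∞)
    (happrox : ∀ ε : ℝ, 0 < ε →
      ∃ (𝔅 : BundledCStarAlg.{v}) (Y : Submodule ℂ 𝔅.carrier)
        (Lε : 𝔅.carrier → ℝ≥0∞) (Φ : ↥X →ₗ[ℂ] ↥Y) (Ψ : ↥Y →ₗ[ℂ] ↥X),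
        -- `Y` is a complete operator system in the unital C*-algebra `𝔅.carrier`
        IsClosed (Y : Set 𝔅.carrier) ∧ (∀ y ∈ Y, star y ∈ Y) ∧ (1 : 𝔅.carrier) ∈ Y ∧
        -- `Lε` is subadditive and absolutely homogeneous on `Y`
        (∀ x ∈ Y, ∀ y ∈ Y, Lε (x + y) ≤ Lε x + Lε y) ∧
        (∀ (c : ℂ), ∀ x ∈ Y, Lε (c • x) = (‖c‖₊ : ℝ≥0∞) * Lε x) ∧
        -- (1) the kernel of `Lε` is norm-closed, and the image of the `Lε`-unit ball of `Y`
        -- in the quotient `Y/ker(Lε)` is totally bounded for the quotient norm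
        IsClosed {y : 𝔅.carrier | y ∈ Y ∧ Lε y = 0} ∧
        (∀ r : ℝ, 0 < r → ∃ F : Finset 𝔅.carrier,
          (↑F : Set 𝔅.carrier) ⊆ (Y : Set 𝔅.carrier) ∧
          ∀ y ∈ Y, Lε y ≤ 1 → ∃ z ∈ F, ∃ v, v ∈ Y ∧ Lε v = 0 ∧ ‖y - z - v‖ < r) ∧
        -- (2) `Ψ` maps the kernel of `Lε` into `ℂ·1`
        (∀ y : ↥Y, Lε (y : 𝔅.carrier) = 0 → ∃ c : ℂ, ((Ψ y : ↥X) : A) = c • (1 : A)) ∧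
        -- (3) `Φ` is bounded for the seminorms and `Ψ` is bounded for the norms
        (∃ C : ℝ, 0 < C ∧
          (∀ x : ↥X, Lε ((Φ x : ↥Y) : 𝔅.carrier) ≤ ENNReal.ofReal C * L (x : A)) ∧
          (∀ y : ↥Y, ‖((Ψ y : ↥X) : A)‖ ≤ C * ‖(y : 𝔅.carrier)‖)) ∧
        -- (4) `‖Ψ(Φ(x)) − x‖ ≤ ε·L(x)` for all `x ∈ X`
        (∀ x : ↥X,
          (‖((Ψ (Φ x) : ↥X) : A) - (x : A)‖₊ : ℝ≥0∞) ≤ ENNReal.ofReal ε * L (x : A))) :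
    ∀ r : ℝ, 0 < r → ∃ F : Finset A, (↑F : Set A) ⊆ (X : Set A) ∧
      ∀ x ∈ X, L x ≤ 1 → ∃ y ∈ F, ∃ c : ℂ, ‖x - y - c • (1 : A)‖ < r := by
  classical
  intro r hr
  obtain ⟨𝔅, Y, Lε, Φ, Ψ, -, -, -, -, hhom, -, hTB, hΨker, ⟨C, hC, hΦ, hΨ⟩, happ⟩ :=
    happrox (r / 2) (half_pos hr)
  obtain ⟨F₀, hF₀Y, hF₀⟩ := hTB (r / (2 * C ^ 2)) (by positivity)
  obtain ⟨F, hF⟩ := Y.exists_isNetModulo_subtype hF₀Y hF₀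
  set Ψ' : ↥Y →ₗ[ℂ] ↥X := (C : ℂ) • Ψ
  have hΨ'_bound : ∀ y, ‖Ψ' y‖ ≤ C ^ 2 * ‖y‖ := fun y => by
    rw [LinearMap.smul_apply, norm_smul, Complex.norm_real, Real.norm_of_nonneg hC.le, sq,
      mul_assoc]
    exact mul_le_mul_of_nonneg_left (hΨ y) hC.le
  have hΨ'_ker : Ψ' '' {v : Y | Lε v = 0} ⊆ {k : X | ∃ c : ℂ, (k : A) = c • (1 : A)} := by
    rintro _ ⟨v, hv, rfl⟩
    obtain ⟨c, hc⟩ := hΨker v hv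
    exact ⟨C * c, by simp [Ψ', hc, mul_smul]⟩
  have hclose : ∀ x ∈ {x : X | L x ≤ 1}, ∃ s ∈ Ψ' '' {y : Y | Lε y ≤ 1}, ‖x - s‖ ≤ r / 2 := by
    intro x hx
    refine ⟨Ψ (Φ x), ⟨(C : ℂ)⁻¹ • Φ x, ?_, ?_⟩, ?_⟩
    · exact apply_inv_smul_le_one (fun c => hhom c _ (Φ x).2) hC
        ((hΦ x).trans (mul_le_of_le_one_right' hx))
    · simp only [Ψ', LinearMap.smul_apply, map_smul,
        inv_smul_smul₀ (Complex.ofReal_ne_zero.2 hC.ne')]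
    · have h := (happ x).trans (mul_le_of_le_one_right' hx)
      rw [ENNReal.le_ofReal_iff_toReal_le ENNReal.coe_ne_top (half_pos hr).le] at h
      rwa [norm_sub_rev]
  have hnet := ((hF.image Ψ' (by positivity) hΨ'_bound).mono hΨ'_ker).of_approx hclose
  rw [show r / 2 + C ^ 2 * (r / (2 * C ^ 2)) = r by field_simp; ring] at hnet
  exact X.exists_finset_of_isNetModulo (P := fun x => L x ≤ 1) (κ := fun c : ℂ => c • (1 : A)) hnet

/-- Theorem 2.6 of the paper: an approximation criterion ensuring that the image of the
`L`-unit ball of `X` under the quotient map `X → X/ℂ·1` is totally bounded for the quotient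
norm, i.e. (by Rieffel's criterion) that `(X, L)` is a compact quantum metric space. -/
theorem statement0 {A : Type u} [CStarAlgebra A] (X : Submodule ℂ A)
    (hXclosed : IsClosed (X : Set A)) (hXstar : ∀ x ∈ X, star x ∈ X) (hX1 : (1 : A) ∈ X)
    (L : A → ℝ≥0∞) (hL : IsLipschitzSeminormOn X L)
    (happrox : ∀ ε : ℝ, 0 < ε →
      ∃ (𝔅 : BundledCStarAlg.{v}) (Y : Submodule ℂ 𝔅.carrier)
        (Lε : 𝔅.carrier → ℝ≥0∞) (Φ : ↥X →ₗ[ℂ] ↥Y) (Ψ : ↥Y →ₗ[ℂ] ↥X),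
        -- `Y` is a complete operator system in the unital C*-algebra `𝔅.carrier`
        IsClosed (Y : Set 𝔅.carrier) ∧ (∀ y ∈ Y, star y ∈ Y) ∧ (1 : 𝔅.carrier) ∈ Y ∧
        -- `Lε` is subadditive and absolutely homogeneous on `Y`
        (∀ x ∈ Y, ∀ y ∈ Y, Lε (x + y) ≤ Lε x + Lε y) ∧
        (∀ (c : ℂ), ∀ x ∈ Y, Lε (c • x) = (‖c‖₊ : ℝ≥0∞) * Lε x) ∧
        -- (1) the kernel of `Lε` is norm-closed, and the image of the `Lε`-unit ball of `Y`
        -- in the quotient `Y/ker(Lε)` is totally bounded for the quotient norm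
        IsClosed {y : 𝔅.carrier | y ∈ Y ∧ Lε y = 0} ∧
        (∀ r : ℝ, 0 < r → ∃ F : Finset 𝔅.carrier,
          (↑F : Set 𝔅.carrier) ⊆ (Y : Set 𝔅.carrier) ∧
          ∀ y ∈ Y, Lε y ≤ 1 → ∃ z ∈ F, ∃ v, v ∈ Y ∧ Lε v = 0 ∧ ‖y - z - v‖ < r) ∧
        -- (2) `Ψ` maps the kernel of `Lε` into `ℂ·1`
        (∀ y : ↥Y, Lε (y : 𝔅.carrier) = 0 → ∃ c : ℂ, ((Ψ y : ↥X) : A) = c • (1 : A)) ∧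
        -- (3) `Φ` is bounded for the seminorms and `Ψ` is bounded for the norms
        (∃ C : ℝ, 0 < C ∧
          (∀ x : ↥X, Lε ((Φ x : ↥Y) : 𝔅.carrier) ≤ ENNReal.ofReal C * L (x : A)) ∧
          (∀ y : ↥Y, ‖((Ψ y : ↥X) : A)‖ ≤ C * ‖(y : 𝔅.carrier)‖)) ∧
        -- (4) `‖Ψ(Φ(x)) − x‖ ≤ ε·L(x)` for all `x ∈ X`
        (∀ x : ↥X,
          (‖((Ψ (Φ x) : ↥X) : A) - (x : A)‖₊ : ℝ≥0∞) ≤ ENNReal.ofReal ε * L (x : A))) :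
    ∀ r : ℝ, 0 < r → ∃ F : Finset A, (↑F : Set A) ⊆ (X : Set A) ∧
      ∀ x ∈ X, L x ≤ 1 → ∃ y ∈ F, ∃ c : ℂ, ‖x - y - c • (1 : A)‖ < r :=
  statement0_general X L happrox
end

section
/- Let X be a complete operator system in a unital C*-algebra A and let L : X → [0,∞] be a Lipschitz seminorm. Suppose that for every ε > 0 there exist a complete operator system X_ε with a Lipschitz seminorm L_ε such that the image of {y ∈ X_ε : L_ε(y) ≤ 1} in X_ε/ℂ·1 is totally bounded for the quotient norm (i.e. (X_ε,L_ε) is a compact quantum metric space), together with unital linear maps Φ_ε : X → X_ε and Ψ_ε : X_ε → X such that: (1) there is a constant C > 0 with L_ε(Φ_ε(x)) ≤ C·L(x) for all x ∈ X and ‖Ψ_ε(y)‖ ≤ C·‖y‖ for all y ∈ X_ε; (2) ‖Ψ_ε(Φ_ε(x)) − x‖ ≤ ε·L(x) for all x ∈ X. Then the image of {x ∈ X : L(x) ≤ 1} under the quotient map X → X/ℂ·1 is totally bounded for the quotient norm (i.e. (X,L) is a compact quantum metric space). -/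
open scoped ENNReal Pointwise

universe u v

/-!
Every `x` in the `L`-unit ball lies within `ε` of `Ψ_ε(Φ_ε x)`, and `Φ_ε x` lies in `C • B_ε`,
where `B_ε` is the `L_ε`-unit ball. Total boundedness modulo scalars passes from `B_ε` to
`C • B_ε` and through the bounded unital map `Ψ_ε`, and a set that is within every `ε` of a set
totally bounded modulo scalars is itself totally bounded modulo scalars.
-/

section

variable {A B : Type*} [SeminormedRing A] [NormedAlgebra ℂ A]
  [SeminormedRing B] [NormedAlgebra ℂ B]

/-- The image of `S` in `X / ℂ·1` is totally bounded for the quotient norm. -/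
def TotallyBoundedModScalars (X : Submodule ℂ A) (S : Set A) : Prop :=
  ∀ r : ℝ, 0 < r → ∃ F : Finset A, (↑F : Set A) ⊆ X ∧
    ∀ x ∈ S, ∃ z ∈ F, ∃ c : ℂ, ‖x - z - c • (1 : A)‖ < r

theorem totallyBoundedModScalars_setOf_iff {X : Submodule ℂ A} {P : A → Prop} :
    TotallyBoundedModScalars X {x | x ∈ X ∧ P x} ↔
      ∀ r : ℝ, 0 < r → ∃ F : Finset A, (↑F : Set A) ⊆ X ∧
        ∀ x ∈ X, P x → ∃ z ∈ F, ∃ c : ℂ, ‖x - z - c • (1 : A)‖ < r := by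
  simp only [TotallyBoundedModScalars, Set.mem_ofPred_eq, and_imp]

namespace TotallyBoundedModScalars

variable {X : Submodule ℂ A}

theorem smul {S : Set A} (hS : TotallyBoundedModScalars X S) (a : ℂ) :
    TotallyBoundedModScalars X (a • S) := by
  classical
  intro r hr
  obtain ⟨F, hFX, hF⟩ := hS (r / (‖a‖ + 1)) (by positivity)
  refine ⟨F.image (a • ·), ?_, ?_⟩
  · intro x hx
    obtain ⟨z, hz, rfl⟩ := Finset.mem_image.1 hx
    exact X.smul_mem a (hFX hz)
  · rintro _ ⟨s, hs, rfl⟩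
    obtain ⟨z, hz, c, hsz⟩ := hF s hs
    refine ⟨a • z, Finset.mem_image_of_mem _ hz, a * c, ?_⟩
    have hdist : a • s - a • z - (a * c) • (1 : A) = a • (s - z - c • 1) := by
      rw [smul_sub, smul_sub, smul_smul]
    calc ‖a • s - a • z - (a * c) • (1 : A)‖ = ‖a‖ * ‖s - z - c • (1 : A)‖ := by
          rw [hdist, norm_smul]
      _ ≤ ‖a‖ * (r / (‖a‖ + 1)) := by gcongr
      _ < r := by
        rw [mul_div_assoc', div_lt_iff₀ (by positivity)]
        nlinarith

theorem of_forall_approx {S : Set A}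
    (h : ∀ ε : ℝ, 0 < ε → ∃ T : Set A, TotallyBoundedModScalars X T ∧
      ∀ x ∈ S, ∃ t ∈ T, ‖x - t‖ ≤ ε) :
    TotallyBoundedModScalars X S := by
  intro r hr
  obtain ⟨T, hT, hST⟩ := h (r / 2) (half_pos hr)
  obtain ⟨F, hFX, hF⟩ := hT (r / 2) (half_pos hr)
  refine ⟨F, hFX, fun x hx => ?_⟩
  obtain ⟨t, ht, hxt⟩ := hST x hx
  obtain ⟨z, hz, c, htz⟩ := hF t ht
  refine ⟨z, hz, c, ?_⟩
  calc ‖x - z - c • (1 : A)‖ = ‖(x - t) + (t - z - c • 1)‖ := by congr 1; abel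
    _ ≤ ‖x - t‖ + ‖t - z - c • (1 : A)‖ := norm_add_le _ _
    _ < r / 2 + r / 2 := add_lt_add_of_le_of_lt hxt htz
    _ = r := add_halves r

theorem map {Y : Submodule ℂ B} (hY1 : (1 : B) ∈ Y) {S : Set B}
    (hS : TotallyBoundedModScalars Y S) (Ψ : Y →ₗ[ℂ] X) (hΨ1 : (Ψ ⟨1, hY1⟩ : A) = 1)
    {C : ℝ} (hC : 0 < C) (hΨ : ∀ y : Y, ‖(Ψ y : A)‖ ≤ C * ‖(y : B)‖) :
    TotallyBoundedModScalars X ((↑) '' (Ψ '' ((↑) ⁻¹' S))) := by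
  classical
  intro r hr
  obtain ⟨F, hFY, hF⟩ := hS (r / C) (div_pos hr hC)
  refine ⟨(F.subtype (· ∈ Y)).image fun z => (Ψ z : A), ?_, ?_⟩
  · intro x hx
    obtain ⟨z, -, rfl⟩ := Finset.mem_image.1 hx
    exact (Ψ z).2
  · rintro _ ⟨_, ⟨y, hy, rfl⟩, rfl⟩
    obtain ⟨z, hz, c, hyz⟩ := hF y hy
    let z' : Y := ⟨z, hFY hz⟩
    refine ⟨Ψ z', Finset.mem_image_of_mem _ (Finset.mem_subtype.2 hz), c, ?_⟩
    have hΨdiff : ((Ψ (y - z' - c • ⟨1, hY1⟩) : X) : A) = Ψ y - Ψ z' - c • (1 : A) := by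
      simp only [map_sub, map_smul, Submodule.coe_sub, Submodule.coe_smul, hΨ1]
    calc ‖(Ψ y : A) - Ψ z' - c • (1 : A)‖ ≤ C * ‖(y : B) - z - c • (1 : B)‖ := by
          rw [← hΨdiff]; exact hΨ _
      _ < C * (r / C) := by gcongr
      _ = r := mul_div_cancel₀ r hC.ne'

end TotallyBoundedModScalars

def lipBall (X : Submodule ℂ A) (L : A → ℝ≥0∞) (t : ℝ≥0∞) : Set A :=
  {x | x ∈ X ∧ L x ≤ t}

theorem lipBall_subset_smul_lipBall_one {X : Submodule ℂ A} {L : A → ℝ≥0∞}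
    (hL : ∀ (c : ℂ), ∀ x ∈ X, L (c • x) = (‖c‖₊ : ℝ≥0∞) * L x) {t : ℝ} (ht : 0 < t) :
    lipBall X L (ENNReal.ofReal t) ⊆ (t : ℂ) • lipBall X L 1 := by
  rintro x ⟨hxX, hLx⟩
  have ht' : (t : ℂ) ≠ 0 := Complex.ofReal_ne_zero.2 ht.ne'
  refine ⟨(t : ℂ)⁻¹ • x, ⟨X.smul_mem _ hxX, ?_⟩, smul_inv_smul₀ ht' x⟩
  have hnorm : (‖(t : ℂ)⁻¹‖₊ : ℝ≥0∞) = ENNReal.ofReal t⁻¹ := by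
    rw [← Complex.ofReal_inv, Complex.nnnorm_real, Real.nnnorm_of_nonneg (by positivity),
      ENNReal.ofReal, Real.toNNReal_of_nonneg (by positivity)]
  calc L ((t : ℂ)⁻¹ • x) = ENNReal.ofReal t⁻¹ * L x := by rw [hL _ x hxX, hnorm]
    _ ≤ ENNReal.ofReal t⁻¹ * ENNReal.ofReal t := by gcongr
    _ = 1 := by
      rw [← ENNReal.ofReal_mul (by positivity), inv_mul_cancel₀ ht.ne', ENNReal.ofReal_one]

end

theorem statement1_general {A : Type u} [CStarAlgebra A] (X : Submodule ℂ A)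
    (L : A → ℝ≥0∞)
    (happrox : ∀ ε : ℝ, 0 < ε →
      ∃ (𝔅 : BundledCStarAlg.{v}) (Y : Submodule ℂ 𝔅.carrier)
        (Lε : 𝔅.carrier → ℝ≥0∞) (Φ : ↥X →ₗ[ℂ] ↥Y) (Ψ : ↥Y →ₗ[ℂ] ↥X),
        -- `Y` is a complete operator system in the unital C*-algebra `𝔅.carrier`
        IsClosed (Y : Set 𝔅.carrier) ∧ (∀ y ∈ Y, star y ∈ Y) ∧ (1 : 𝔅.carrier) ∈ Y ∧
        -- `Lε` is a Lipschitz seminorm on `Y`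
        IsLipschitzSeminormOn Y Lε ∧
        -- `(Y, Lε)` is a compact quantum metric space: the image of the `Lε`-unit ball of
        -- `Y` in the quotient `Y/ℂ·1` is totally bounded for the quotient norm
        (∀ r : ℝ, 0 < r → ∃ F : Finset 𝔅.carrier,
          (↑F : Set 𝔅.carrier) ⊆ (Y : Set 𝔅.carrier) ∧
          ∀ y ∈ Y, Lε y ≤ 1 → ∃ z ∈ F, ∃ c : ℂ, ‖y - z - c • (1 : 𝔅.carrier)‖ < r) ∧
        -- `Φ` and `Ψ` are unital
        (∀ x : ↥X, (x : A) = 1 → ((Φ x : ↥Y) : 𝔅.carrier) = 1) ∧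
        (∀ y : ↥Y, (y : 𝔅.carrier) = 1 → ((Ψ y : ↥X) : A) = 1) ∧
        -- (1) `Φ` is bounded for the Lipschitz seminorms, `Ψ` is bounded for the norms
        (∃ C : ℝ, 0 < C ∧
          (∀ x : ↥X, Lε ((Φ x : ↥Y) : 𝔅.carrier) ≤ ENNReal.ofReal C * L (x : A)) ∧
          (∀ y : ↥Y, ‖((Ψ y : ↥X) : A)‖ ≤ C * ‖(y : 𝔅.carrier)‖)) ∧
        -- (2) `‖Ψ(Φ(x)) − x‖ ≤ ε·L(x)` for all `x ∈ X`
        (∀ x : ↥X,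
          (‖((Ψ (Φ x) : ↥X) : A) - (x : A)‖₊ : ℝ≥0∞) ≤ ENNReal.ofReal ε * L (x : A))) :
    ∀ r : ℝ, 0 < r → ∃ F : Finset A, (↑F : Set A) ⊆ (X : Set A) ∧
      ∀ x ∈ X, L x ≤ 1 → ∃ y ∈ F, ∃ c : ℂ, ‖x - y - c • (1 : A)‖ < r := by
  refine totallyBoundedModScalars_setOf_iff.1 <| .of_forall_approx fun ε hε => ?_
  obtain ⟨𝔅, Y, Lε, Φ, Ψ, -, -, hY1, hLε, hYball, -, hΨ1, ⟨C, hC, hΦL, hΨ⟩, hΨΦ⟩ :=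
    happrox ε hε
  have hB : TotallyBoundedModScalars Y (lipBall Y Lε 1) :=
    totallyBoundedModScalars_setOf_iff.2 hYball
  refine ⟨_, (hB.smul (C : ℂ)).map hY1 Ψ (hΨ1 _ rfl) hC hΨ, fun x ⟨hxX, hLx⟩ => ?_⟩
  let x' : X := ⟨x, hxX⟩
  have hΦx : (Φ x' : 𝔅.carrier) ∈ (C : ℂ) • lipBall Y Lε 1 :=
    lipBall_subset_smul_lipBall_one hLε.2.1 hC
      ⟨(Φ x').2, (hΦL x').trans (mul_le_of_le_one_right' hLx)⟩
  refine ⟨_, ⟨_, ⟨Φ x', hΦx, rfl⟩, rfl⟩, ?_⟩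
  have hclose : ENNReal.ofReal ‖(Ψ (Φ x') : A) - x‖ ≤ ENNReal.ofReal ε := by
    rw [ofReal_norm]
    exact (hΨΦ x').trans (mul_le_of_le_one_right' hLx)
  rw [norm_sub_rev]
  exact (ENNReal.ofReal_le_ofReal_iff hε.le).1 hclose

/-- Corollary 2.7 of the paper: if `(X,L)` can be approximated by compact quantum metric
spaces `(X_ε, L_ε)` via unital linear maps `Φ_ε : X → X_ε` and `Ψ_ε : X_ε → X` which are
bounded for the Lipschitz seminorms resp. the norms and satisfy
`‖Ψ_ε(Φ_ε(x)) − x‖ ≤ ε·L(x)`, then the image of the `L`-unit ball of `X` under the quotient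
map `X → X/ℂ·1` is totally bounded for the quotient norm, i.e. `(X,L)` is a compact quantum
metric space. -/
theorem statement1 {A : Type u} [CStarAlgebra A] (X : Submodule ℂ A)
    (hXclosed : IsClosed (X : Set A)) (hXstar : ∀ x ∈ X, star x ∈ X) (hX1 : (1 : A) ∈ X)
    (L : A → ℝ≥0∞) (hL : IsLipschitzSeminormOn X L)
    (happrox : ∀ ε : ℝ, 0 < ε →
      ∃ (𝔅 : BundledCStarAlg.{v}) (Y : Submodule ℂ 𝔅.carrier)
        (Lε : 𝔅.carrier → ℝ≥0∞) (Φ : ↥X →ₗ[ℂ] ↥Y) (Ψ : ↥Y →ₗ[ℂ] ↥X),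
        -- `Y` is a complete operator system in the unital C*-algebra `𝔅.carrier`
        IsClosed (Y : Set 𝔅.carrier) ∧ (∀ y ∈ Y, star y ∈ Y) ∧ (1 : 𝔅.carrier) ∈ Y ∧
        -- `Lε` is a Lipschitz seminorm on `Y`
        IsLipschitzSeminormOn Y Lε ∧
        -- `(Y, Lε)` is a compact quantum metric space: the image of the `Lε`-unit ball of
        -- `Y` in the quotient `Y/ℂ·1` is totally bounded for the quotient norm
        (∀ r : ℝ, 0 < r → ∃ F : Finset 𝔅.carrier,
          (↑F : Set 𝔅.carrier) ⊆ (Y : Set 𝔅.carrier) ∧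
          ∀ y ∈ Y, Lε y ≤ 1 → ∃ z ∈ F, ∃ c : ℂ, ‖y - z - c • (1 : 𝔅.carrier)‖ < r) ∧
        -- `Φ` and `Ψ` are unital
        (∀ x : ↥X, (x : A) = 1 → ((Φ x : ↥Y) : 𝔅.carrier) = 1) ∧
        (∀ y : ↥Y, (y : 𝔅.carrier) = 1 → ((Ψ y : ↥X) : A) = 1) ∧
        -- (1) `Φ` is bounded for the Lipschitz seminorms, `Ψ` is bounded for the norms
        (∃ C : ℝ, 0 < C ∧
          (∀ x : ↥X, Lε ((Φ x : ↥Y) : 𝔅.carrier) ≤ ENNReal.ofReal C * L (x : A)) ∧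
          (∀ y : ↥Y, ‖((Ψ y : ↥X) : A)‖ ≤ C * ‖(y : 𝔅.carrier)‖)) ∧
        -- (2) `‖Ψ(Φ(x)) − x‖ ≤ ε·L(x)` for all `x ∈ X`
        (∀ x : ↥X,
          (‖((Ψ (Φ x) : ↥X) : A) - (x : A)‖₊ : ℝ≥0∞) ≤ ENNReal.ofReal ε * L (x : A))) :
    ∀ r : ℝ, 0 < r → ∃ F : Finset A, (↑F : Set A) ⊆ (X : Set A) ∧
      ∀ x ∈ X, L x ≤ 1 → ∃ y ∈ F, ∃ c : ℂ, ‖x - y - c • (1 : A)‖ < r :=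
  statement1_general X L happrox
end

section
/- Let X be a complete operator system in a unital C*-algebra A and let L : X → [0,∞] be a Lipschitz seminorm such that the image of {x ∈ X : L(x) ≤ 1} in X/ℂ·1 is totally bounded for the quotient norm (i.e. (X,L) is a compact quantum metric space). Let Y ⊆ X be a norm-closed subspace with 1 ∈ Y and y* ∈ Y for all y ∈ Y, such that {y ∈ Y : L(y) < ∞} is norm-dense in Y. Suppose there exist a constant D ≥ 0, a number ε > 0, and a unital positive linear map Φ : X → Y such that L(Φ(x)) ≤ (1+D)·L(x) and ‖x − Φ(x)‖ ≤ ε·L(x) for all x ∈ X. Then for all states μ, ν on X: d_L(μ,ν) ≤ (D/(1+D))·diam(X,L) + 2ε + sup{|μ(y) − ν(y)| : y ∈ Y, L(y) ≤ 1}, where diam(X,L) := sup{d_L(μ',ν') : μ', ν' states on X} and d_L(μ,ν) := sup{|μ(x) − ν(x)| : x ∈ X, L(x) ≤ 1}. -/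
open scoped ENNReal ComplexOrder

/-- A state on the operator system `X`: a linear functional sending the unit to `1` which
is nonnegative on the elements of `X` that are positive in the ambient C*-algebra. -/
def IsStateOn {A : Type*} [CStarAlgebra A] (X : Submodule ℂ A) (hX1 : (1 : A) ∈ X)
    (μ : ↥X →ₗ[ℂ] ℂ) : Prop :=
  μ ⟨1, hX1⟩ = 1 ∧ ∀ x : ↥X, (∃ y : A, (x : A) = star y * y) → 0 ≤ μ x

/-- The Monge–Kantorovič distance `d_L(μ,ν) = sup{|μ(x) − ν(x)| : x ∈ X, L(x) ≤ 1}`,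
as an element of `[0,∞]`. -/
noncomputable def MKdist {A : Type*} [CStarAlgebra A] (X : Submodule ℂ A)
    (L : A → ℝ≥0∞) (μ ν : ↥X →ₗ[ℂ] ℂ) : ℝ≥0∞ :=
  ⨆ (x : ↥X) (_ : L (x : A) ≤ 1), (‖μ x - ν x‖₊ : ℝ≥0∞)


/-!
Given `x` with `L x ≤ 1`, put `z = Φ x`. A state is contractive on the operator system (on
self-adjoint `w` it is bounded by `‖w‖` since `‖w‖·1 − w ≥ 0`, and a phase rotation reduces
the general case to real parts), so `μ` and `ν` move by at most `ε` from `x` to `z`. Since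
`L z ≤ 1 + D`, the element `z / (1 + D) ∈ Y` is admissible for the `Y`-distance, which
accounts for a `1/(1+D)` share of `|μ z − ν z|`; the remaining `D/(1+D)` share is bounded by
the diameter, because `μ ∘ Φ` and `ν ∘ Φ` are again states and
`|μ z − ν z| = |(μ ∘ Φ) x − (ν ∘ Φ) x|`.
-/

open scoped ComplexStarModule

theorem LinearMap.norm_apply_le_of_re_apply_le {𝕜 E : Type*} [RCLike 𝕜]
    [SeminormedAddCommGroup E] [NormedSpace 𝕜 E] (f : E →ₗ[𝕜] 𝕜)
    (hf : ∀ v, RCLike.re (f v) ≤ ‖v‖) (v : E) : ‖f v‖ ≤ ‖v‖ := by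
  have key : ‖f v‖ ^ 2 ≤ ‖f v‖ * ‖v‖ :=
    calc ‖f v‖ ^ 2 = RCLike.re (f (star (f v) • v)) := by
          rw [map_smul, smul_eq_mul, RCLike.star_def, RCLike.conj_mul, ← RCLike.ofReal_pow,
            RCLike.ofReal_re]
      _ ≤ ‖star (f v) • v‖ := hf _
      _ = ‖f v‖ * ‖v‖ := by rw [norm_smul, norm_star]
  nlinarith [norm_nonneg (f v), norm_nonneg v]

theorem norm_realPart_le {A : Type*} [SeminormedAddCommGroup A] [StarAddMonoid A]
    [NormedSpace ℂ A] [StarModule ℂ A] [NormedStarGroup A] (a : A) : ‖(ℜ a : A)‖ ≤ ‖a‖ :=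
  calc ‖(ℜ a : A)‖ = 2⁻¹ * ‖a + star a‖ := by rw [realPart_apply_coe, norm_smul]; norm_num
    _ ≤ 2⁻¹ * (‖a‖ + ‖star a‖) := by gcongr; exact norm_add_le _ _
    _ = ‖a‖ := by rw [norm_star]; ring

theorem IsSelfAdjoint.exists_norm_smul_one_sub_eq_star_mul_self {A : Type*} [CStarAlgebra A]
    {a : A} (ha : IsSelfAdjoint a) : ∃ y : A, ‖a‖ • (1 : A) - a = star y * y := by
  let := CStarAlgebra.spectralOrder A
  have := CStarAlgebra.spectralOrderedRing A
  rw [← CStarAlgebra.nonneg_iff_eq_star_mul_self, ← Algebra.algebraMap_eq_smul_one, sub_nonneg]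
  exact ha.le_algebraMap_norm_self

namespace IsStateOn

variable {A : Type*} [CStarAlgebra A] {X : Submodule ℂ A} {hX1 : (1 : A) ∈ X}
  {μ : ↥X →ₗ[ℂ] ℂ}

theorem apply_le_norm (hμ : IsStateOn X hX1 μ) {w : ↥X} (hw : IsSelfAdjoint (w : A)) :
    μ w ≤ ‖(w : A)‖ := by
  have hpos : 0 ≤ μ ((‖(w : A)‖ : ℂ) • ⟨1, hX1⟩ - w) := by
    refine hμ.2 _ ?_
    simpa [Complex.coe_smul] using hw.exists_norm_smul_one_sub_eq_star_mul_self
  rwa [map_sub, map_smul, hμ.1, smul_eq_mul, mul_one, sub_nonneg] at hpos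

theorem re_apply_le_norm (hXstar : ∀ x ∈ X, star x ∈ X) (hμ : IsStateOn X hX1 μ) (v : ↥X) :
    (μ v).re ≤ ‖(v : A)‖ := by
  have hstar : star (v : A) ∈ X := hXstar _ v.2
  let vre : ↥X := ⟨ℜ (v : A), by
    rw [realPart_apply_coe]; exact X.smul_of_tower_mem _ (X.add_mem v.2 hstar)⟩
  let vim : ↥X := ⟨ℑ (v : A), by
    rw [imaginaryPart_apply_coe]
    exact X.smul_mem _ (X.smul_of_tower_mem _ (X.sub_mem v.2 hstar))⟩
  have hv : v = vre + Complex.I • vim := Subtype.ext (realPart_add_I_smul_imaginaryPart _).symm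
  have hre := Complex.le_def.mp (hμ.apply_le_norm (w := vre) (ℜ (v : A)).2)
  have him := Complex.le_def.mp (hμ.apply_le_norm (w := vim) (ℑ (v : A)).2)
  simp only [Complex.ofReal_re, Complex.ofReal_im] at hre him
  calc (μ v).re = (μ vre).re := by
        rw [hv, map_add, map_smul, smul_eq_mul, Complex.add_re, Complex.I_mul_re, him.2, neg_zero,
          add_zero]
    _ ≤ ‖(ℜ (v : A) : A)‖ := hre.1
    _ ≤ ‖(v : A)‖ := norm_realPart_le _

theorem norm_apply_le (hXstar : ∀ x ∈ X, star x ∈ X) (hμ : IsStateOn X hX1 μ) (v : ↥X) :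
    ‖μ v‖ ≤ ‖(v : A)‖ :=
  μ.norm_apply_le_of_re_apply_le (hμ.re_apply_le_norm hXstar) v

theorem comp (hμ : IsStateOn X hX1 μ) {Φ : ↥X →ₗ[ℂ] ↥X} (hΦ1 : Φ ⟨1, hX1⟩ = ⟨1, hX1⟩)
    (hΦpos : ∀ x : ↥X, (∃ y : A, (x : A) = star y * y) →
      ∃ z : A, ((Φ x : ↥X) : A) = star z * z) :
    IsStateOn X hX1 (μ.comp Φ) :=
  ⟨by rw [LinearMap.comp_apply, hΦ1, hμ.1], fun v hv => hμ.2 _ (hΦpos v hv)⟩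

theorem norm_sub_le_of_norm_sub_le (hXstar : ∀ x ∈ X, star x ∈ X) {ν : ↥X →ₗ[ℂ] ℂ}
    (hμ : IsStateOn X hX1 μ) (hν : IsStateOn X hX1 ν) {x z : ↥X} {ε : ℝ}
    (hxz : ‖(x : A) - z‖ ≤ ε) : ‖μ x - ν x‖ ≤ 2 * ε + ‖μ z - ν z‖ := by
  have hμxz : ‖μ x - μ z‖ ≤ ε := by
    rw [← map_sub]; exact (hμ.norm_apply_le hXstar _).trans hxz
  have hνxz : ‖ν z - ν x‖ ≤ ε := by
    rw [norm_sub_rev, ← map_sub]; exact (hν.norm_apply_le hXstar _).trans hxz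
  calc ‖μ x - ν x‖ ≤ ‖μ x - μ z‖ + ‖μ z - ν z‖ + ‖ν z - ν x‖ := by
        simpa only [dist_eq_norm] using dist_triangle4 (μ x) (μ z) (ν z) (ν x)
    _ ≤ 2 * ε + ‖μ z - ν z‖ := by linarith

end IsStateOn

theorem IsLipschitzSeminormOn.apply_ofReal_inv_smul_le_one {A : Type*} [CStarAlgebra A]
    {X : Submodule ℂ A} {L : A → ℝ≥0∞} (hL : IsLipschitzSeminormOn X L) {r : ℝ} (hr : 0 < r)
    {z : A} (hz : z ∈ X) (hLz : L z ≤ ENNReal.ofReal r) : L (((r⁻¹ : ℝ) : ℂ) • z) ≤ 1 :=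
  calc L (((r⁻¹ : ℝ) : ℂ) • z) = ENNReal.ofReal r⁻¹ * L z := by
        rw [hL.2.1 _ _ hz, ← enorm_eq_nnnorm, ← ofReal_norm, Complex.norm_real, Real.norm_eq_abs,
          abs_of_pos (inv_pos.mpr hr)]
    _ ≤ ENNReal.ofReal r⁻¹ * ENNReal.ofReal r := by gcongr
    _ = 1 := by rw [← ENNReal.ofReal_mul (inv_nonneg.mpr hr.le), inv_mul_cancel₀ hr.ne',
          ENNReal.ofReal_one]

theorem statement4_general {A : Type} [CStarAlgebra A] (X : Submodule ℂ A)
    (hXstar : ∀ x ∈ X, star x ∈ X) (hX1 : (1 : A) ∈ X)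
    (L : A → ℝ≥0∞) (hL : IsLipschitzSeminormOn X L)
    (Y : Submodule ℂ A)
    -- the unital positive map `Φ : X → Y`
    (D : ℝ) (hD : 0 ≤ D) (ε : ℝ) (hε : 0 < ε)
    (Φ : ↥X →ₗ[ℂ] ↥X)
    (hΦY : ∀ x : ↥X, ((Φ x : ↥X) : A) ∈ Y)
    (hΦ1 : Φ ⟨1, hX1⟩ = ⟨1, hX1⟩)
    (hΦpos : ∀ x : ↥X, (∃ y : A, (x : A) = star y * y) →
      ∃ z : A, ((Φ x : ↥X) : A) = star z * z)
    (hΦL : ∀ x : ↥X, L ((Φ x : ↥X) : A) ≤ ENNReal.ofReal (1 + D) * L (x : A))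
    (hΦapprox : ∀ x : ↥X,
      (‖(x : A) - ((Φ x : ↥X) : A)‖₊ : ℝ≥0∞) ≤ ENNReal.ofReal ε * L (x : A))
    -- two states on `X`
    (μ ν : ↥X →ₗ[ℂ] ℂ) (hμ : IsStateOn X hX1 μ) (hν : IsStateOn X hX1 ν) :
    MKdist X L μ ν ≤
      ENNReal.ofReal (D / (1 + D)) *
          (⨆ (μ' : ↥X →ₗ[ℂ] ℂ) (_ : IsStateOn X hX1 μ') (ν' : ↥X →ₗ[ℂ] ℂ)
            (_ : IsStateOn X hX1 ν'), MKdist X L μ' ν') +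
        ENNReal.ofReal (2 * ε) +
        ⨆ (x : ↥X) (_ : (x : A) ∈ Y) (_ : L (x : A) ≤ 1), (‖μ x - ν x‖₊ : ℝ≥0∞) := by
  have h1D : 0 < 1 + D := by linarith
  refine iSup₂_le fun x hx => ?_
  set z := Φ x
  let w : ↥X := (((1 + D)⁻¹ : ℝ) : ℂ) • z
  have hwL : L (w : A) ≤ 1 :=
    hL.apply_ofReal_inv_smul_le_one h1D z.2 ((hΦL x).trans (mul_le_of_le_one_right' hx))
  have hxz : ‖(x : A) - z‖ ≤ ε := by
    have h := (hΦapprox x).trans (mul_le_of_le_one_right' hx)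
    rwa [← ENNReal.ofReal_coe_nnreal, ENNReal.ofReal_le_ofReal_iff hε.le] at h
  have hw : ‖μ w - ν w‖ = (1 + D)⁻¹ * ‖μ z - ν z‖ := by
    rw [map_smul, map_smul, smul_eq_mul, smul_eq_mul, ← mul_sub, norm_mul, Complex.norm_real,
      Real.norm_of_nonneg (inv_pos.mpr h1D).le]
  have hsplit : ‖μ x - ν x‖ ≤ D / (1 + D) * ‖μ z - ν z‖ + 2 * ε + ‖μ w - ν w‖ :=
    calc ‖μ x - ν x‖ ≤ 2 * ε + ‖μ z - ν z‖ := hμ.norm_sub_le_of_norm_sub_le hXstar hν hxz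
      _ = D / (1 + D) * ‖μ z - ν z‖ + 2 * ε + ‖μ w - ν w‖ := by rw [hw]; field_simp; ring
  have hdiam : ENNReal.ofReal ‖μ z - ν z‖ ≤
      ⨆ (μ' : ↥X →ₗ[ℂ] ℂ) (_ : IsStateOn X hX1 μ') (ν' : ↥X →ₗ[ℂ] ℂ)
        (_ : IsStateOn X hX1 ν'), MKdist X L μ' ν' :=
    le_iSup₂_of_le (μ.comp Φ) (hμ.comp hΦ1 hΦpos) <| le_iSup₂_of_le (ν.comp Φ)
      (hν.comp hΦ1 hΦpos) <| le_iSup₂_of_le x hx ENNReal.ofReal_coe_nnreal.le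
  have hY : ENNReal.ofReal ‖μ w - ν w‖ ≤
      ⨆ (x : ↥X) (_ : (x : A) ∈ Y) (_ : L (x : A) ≤ 1), (‖μ x - ν x‖₊ : ℝ≥0∞) :=
    le_iSup_of_le w <| le_iSup₂_of_le (Y.smul_mem _ (hΦY x)) hwL ENNReal.ofReal_coe_nnreal.le
  calc (‖μ x - ν x‖₊ : ℝ≥0∞) = ENNReal.ofReal ‖μ x - ν x‖ := ENNReal.ofReal_coe_nnreal.symm
    _ ≤ ENNReal.ofReal (D / (1 + D)) * ENNReal.ofReal ‖μ z - ν z‖ + ENNReal.ofReal (2 * ε) +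
          ENNReal.ofReal ‖μ w - ν w‖ := by
        grw [hsplit, ENNReal.ofReal_add_le, ENNReal.ofReal_add_le,
          ENNReal.ofReal_mul (by positivity)]
    _ ≤ _ := by gcongr

/-- Corollary 2.12 of the paper: if a unital positive map `Φ : X → Y ⊆ X` satisfies
`L(Φ(x)) ≤ (1+D)·L(x)` and `‖x − Φ(x)‖ ≤ ε·L(x)`, then for all states `μ, ν` on `X`:
`d_L(μ,ν) ≤ (D/(1+D))·diam(X,L) + 2ε + d_L(μ|_Y, ν|_Y)`. -/
theorem statement4 {A : Type} [CStarAlgebra A] (X : Submodule ℂ A)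
    (hXclosed : IsClosed (X : Set A)) (hXstar : ∀ x ∈ X, star x ∈ X) (hX1 : (1 : A) ∈ X)
    (L : A → ℝ≥0∞) (hL : IsLipschitzSeminormOn X L)
    -- `(X, L)` is a compact quantum metric space (Rieffel's criterion)
    (htb : ∀ r : ℝ, 0 < r → ∃ F : Finset A, (↑F : Set A) ⊆ (X : Set A) ∧
      ∀ x ∈ X, L x ≤ 1 → ∃ y ∈ F, ∃ c : ℂ, ‖x - y - c • (1 : A)‖ < r)
    -- `Y ⊆ X` is a sub-operator system with norm-dense Lipschitz domain
    (Y : Submodule ℂ A) (hYX : Y ≤ X)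
    (hYclosed : IsClosed (Y : Set A)) (hYstar : ∀ y ∈ Y, star y ∈ Y) (hY1 : (1 : A) ∈ Y)
    (hYdense : ∀ y ∈ Y, y ∈ closure {z : A | z ∈ Y ∧ L z < ⊤})
    -- the unital positive map `Φ : X → Y`
    (D : ℝ) (hD : 0 ≤ D) (ε : ℝ) (hε : 0 < ε)
    (Φ : ↥X →ₗ[ℂ] ↥X)
    (hΦY : ∀ x : ↥X, ((Φ x : ↥X) : A) ∈ Y)
    (hΦ1 : Φ ⟨1, hX1⟩ = ⟨1, hX1⟩)
    (hΦpos : ∀ x : ↥X, (∃ y : A, (x : A) = star y * y) →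
      ∃ z : A, ((Φ x : ↥X) : A) = star z * z)
    (hΦL : ∀ x : ↥X, L ((Φ x : ↥X) : A) ≤ ENNReal.ofReal (1 + D) * L (x : A))
    (hΦapprox : ∀ x : ↥X,
      (‖(x : A) - ((Φ x : ↥X) : A)‖₊ : ℝ≥0∞) ≤ ENNReal.ofReal ε * L (x : A))
    -- two states on `X`
    (μ ν : ↥X →ₗ[ℂ] ℂ) (hμ : IsStateOn X hX1 μ) (hν : IsStateOn X hX1 ν) :
    MKdist X L μ ν ≤
      ENNReal.ofReal (D / (1 + D)) *
          (⨆ (μ' : ↥X →ₗ[ℂ] ℂ) (_ : IsStateOn X hX1 μ') (ν' : ↥X →ₗ[ℂ] ℂ)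
            (_ : IsStateOn X hX1 ν'), MKdist X L μ' ν') +
        ENNReal.ofReal (2 * ε) +
        ⨆ (x : ↥X) (_ : (x : A) ∈ Y) (_ : L (x : A) ≤ 1), (‖μ x - ν x‖₊ : ℝ≥0∞) :=
  statement4_general X hXstar hX1 L hL Y D hD ε hε Φ hΦY hΦ1 hΦpos hΦL hΦapprox μ ν hμ hν
end

section
/- (Grothendieck) Let (H_i)_{i∈ℤ} and (K_i)_{i∈ℤ} be families of complex Hilbert spaces with ℓ²-direct sums H = ⊕_{i∈ℤ} H_i and K = ⊕_{i∈ℤ} K_i. Let a, b : ℤ → ℓ²(ℤ) be families of vectors with c(a) := sup_{i∈ℤ} ‖a(i)‖₂ < ∞ and c(b) := sup_{i∈ℤ} ‖b(i)‖₂ < ∞, and define φ : ℤ×ℤ → ℂ by φ(i,j) := ⟨a(i), b(j)⟩. Then for every bounded linear operator T : H → K there exists a unique bounded linear operator S : H → K whose matrix entries satisfy S_{ij} = φ(i,j)·T_{ij} for all i,j ∈ ℤ, and moreover ‖S‖ ≤ c(a)·c(b)·‖T‖. -/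
open scoped ENNReal ComplexConjugate

variable {H K : ℤ → Type} [∀ i, NormedAddCommGroup (H i)] [∀ i, InnerProductSpace ℂ (H i)]
  [∀ i, CompleteSpace (H i)] [∀ i, NormedAddCommGroup (K i)] [∀ i, InnerProductSpace ℂ (K i)]
  [∀ i, CompleteSpace (K i)]

/-- The `(i,j)` matrix entry `T_{ij} = P_i ∘ T ∘ ι_j : H_j → K_i` of a bounded operator
`T : ⊕_{i∈ℤ} H_i → ⊕_{i∈ℤ} K_i` between ℓ²-direct sums. -/
noncomputable def matrixEntry (T : lp H 2 →L[ℂ] lp K 2) (i j : ℤ) (v : H j) : K i :=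
  T (lp.single 2 j v) i

section Aux

local notation "⟪" x ", " y "⟫" => @inner ℂ _ _ x y

variable {E : ℤ → Type} [∀ i, NormedAddCommGroup (E i)] [∀ i, InnerProductSpace ℂ (E i)]

/-- The diagonal operator on `lp E 2` with diagonal entries `i ↦ a i k`. -/
noncomputable def diagF (a : ℤ → lp (fun _ : ℤ => ℂ) 2) (M : ℝ) (hM : ∀ i, ‖a i‖ ≤ M)
    (k : ℤ) (g : lp E 2) : lp E 2 :=
  ⟨fun i => a i k • g i, by
    apply memℓp_gen
    have hg : Summable fun i => ‖g i‖ ^ (2 : ℝ≥0∞).toReal :=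
      (lp.memℓp g).summable (by norm_num)
    refine Summable.of_nonneg_of_le (fun i => Real.rpow_nonneg (norm_nonneg _) _)
      (fun i => ?_) (hg.mul_left (M ^ (2 : ℝ≥0∞).toReal))
    rw [norm_smul, Real.mul_rpow (norm_nonneg _) (norm_nonneg _)]
    have h1 : ‖a i k‖ ≤ M :=
      le_trans (lp.norm_apply_le_norm (by norm_num) (a i) k) (hM i)
    exact mul_le_mul_of_nonneg_right
      (Real.rpow_le_rpow (norm_nonneg _) h1 ENNReal.toReal_nonneg)
      (Real.rpow_nonneg (norm_nonneg _) _)⟩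

@[simp] lemma diagF_apply (a : ℤ → lp (fun _ : ℤ => ℂ) 2) (M : ℝ) (hM : ∀ i, ‖a i‖ ≤ M)
    (k : ℤ) (g : lp E 2) (i : ℤ) : diagF a M hM k g i = a i k • g i := rfl

lemma diagF_add (a : ℤ → lp (fun _ : ℤ => ℂ) 2) (M : ℝ) (hM : ∀ i, ‖a i‖ ≤ M)
    (k : ℤ) (g g' : lp E 2) :
    diagF a M hM k (g + g') = diagF a M hM k g + diagF a M hM k g' := by
  apply lp.ext
  funext i
  simp [smul_add]

lemma diagF_smul (a : ℤ → lp (fun _ : ℤ => ℂ) 2) (M : ℝ) (hM : ∀ i, ‖a i‖ ≤ M)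
    (k : ℤ) (c : ℂ) (g : lp E 2) :
    diagF a M hM k (c • g) = c • diagF a M hM k g := by
  apply lp.ext
  funext i
  simp only [diagF_apply, lp.coeFn_smul, Pi.smul_apply]
  exact smul_comm _ _ _

lemma diagF_single (a : ℤ → lp (fun _ : ℤ => ℂ) 2) (M : ℝ) (hM : ∀ i, ‖a i‖ ≤ M)
    (k j : ℤ) (v : E j) :
    diagF a M hM k (lp.single 2 j v) = lp.single 2 j (a j k • v) := by
  apply lp.ext
  funext i
  simp only [diagF_apply]
  rcases eq_or_ne i j with rfl | h
  · rw [lp.single_apply_self, lp.single_apply_self]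
  · rw [lp.single_apply_ne 2 j v h, lp.single_apply_ne 2 j _ h, smul_zero]

/-- The square-sum estimate `∑_k ‖D_{a_k} g‖² ≤ (M ‖g‖)²`. -/
lemma diagF_est (a : ℤ → lp (fun _ : ℤ => ℂ) 2) (M : ℝ) (hM : ∀ i, ‖a i‖ ≤ M) (g : lp E 2) :
    Summable (fun k => ‖diagF a M hM k g‖ ^ (2 : ℝ)) ∧
      ∑' k, ‖diagF a M hM k g‖ ^ (2 : ℝ) ≤ (M * ‖g‖) ^ (2 : ℝ) := by
  have hM0 : 0 ≤ M := le_trans (norm_nonneg _) (hM 0)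
  have h2 : (2 : ℝ≥0∞).toReal = (2 : ℝ) := by norm_num
  have hp : 0 < (2 : ℝ≥0∞).toReal := by norm_num
  have hAk : ∀ k, HasSum (fun i => ‖a i k • g i‖ ^ (2 : ℝ)) (‖diagF a M hM k g‖ ^ (2 : ℝ)) := by
    intro k
    simpa only [h2, diagF_apply] using lp.hasSum_norm hp (diagF a M hM k g)
  have hai : ∀ i, HasSum (fun k => ‖a i k‖ ^ (2 : ℝ)) (‖a i‖ ^ (2 : ℝ)) := by
    intro i
    simpa only [h2] using lp.hasSum_norm hp (a i)
  have hgi : HasSum (fun i => ‖g i‖ ^ (2 : ℝ)) (‖g‖ ^ (2 : ℝ)) := by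
    simpa only [h2] using lp.hasSum_norm hp g
  have hF1 : ∀ k, (∑' i, ENNReal.ofReal (‖a i k • g i‖ ^ (2 : ℝ)))
      = ENNReal.ofReal (‖diagF a M hM k g‖ ^ (2 : ℝ)) := by
    intro k
    rw [← ENNReal.ofReal_tsum_of_nonneg (fun i => Real.rpow_nonneg (norm_nonneg _) _)
      (hAk k).summable, (hAk k).tsum_eq]
  have key : (∑' k, ENNReal.ofReal (‖diagF a M hM k g‖ ^ (2 : ℝ)))
      ≤ ENNReal.ofReal ((M * ‖g‖) ^ (2 : ℝ)) := by
    have hsplit : ∀ k i, ENNReal.ofReal (‖a i k • g i‖ ^ (2 : ℝ))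
        = ENNReal.ofReal (‖a i k‖ ^ (2 : ℝ)) * ENNReal.ofReal (‖g i‖ ^ (2 : ℝ)) := by
      intro k i
      rw [norm_smul, Real.mul_rpow (norm_nonneg _) (norm_nonneg _),
        ENNReal.ofReal_mul (Real.rpow_nonneg (norm_nonneg _) _)]
    calc (∑' k, ENNReal.ofReal (‖diagF a M hM k g‖ ^ (2 : ℝ)))
        = ∑' k, ∑' i, ENNReal.ofReal (‖a i k • g i‖ ^ (2 : ℝ)) := by
          exact (tsum_congr fun k => (hF1 k)).symm
      _ = ∑' i, ∑' k, ENNReal.ofReal (‖a i k • g i‖ ^ (2 : ℝ)) := ENNReal.tsum_comm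
      _ = ∑' i, (∑' k, ENNReal.ofReal (‖a i k‖ ^ (2 : ℝ))) * ENNReal.ofReal (‖g i‖ ^ (2 : ℝ)) := by
          refine tsum_congr fun i => ?_
          simp_rw [hsplit]
          exact ENNReal.tsum_mul_right
      _ = ∑' i, ENNReal.ofReal (‖a i‖ ^ (2 : ℝ)) * ENNReal.ofReal (‖g i‖ ^ (2 : ℝ)) := by
          refine tsum_congr fun i => ?_
          rw [← ENNReal.ofReal_tsum_of_nonneg (fun k => Real.rpow_nonneg (norm_nonneg _) _)
            (hai i).summable, (hai i).tsum_eq]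
      _ ≤ ∑' i, ENNReal.ofReal (M ^ (2 : ℝ)) * ENNReal.ofReal (‖g i‖ ^ (2 : ℝ)) := by
          refine ENNReal.tsum_le_tsum fun i => ?_
          exact mul_le_mul_left (ENNReal.ofReal_le_ofReal
            (Real.rpow_le_rpow (norm_nonneg _) (hM i) (by norm_num))) _
      _ = ENNReal.ofReal (M ^ (2 : ℝ)) * ∑' i, ENNReal.ofReal (‖g i‖ ^ (2 : ℝ)) :=
          ENNReal.tsum_mul_left
      _ = ENNReal.ofReal (M ^ (2 : ℝ)) * ENNReal.ofReal (‖g‖ ^ (2 : ℝ)) := by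
          rw [← ENNReal.ofReal_tsum_of_nonneg (fun i => Real.rpow_nonneg (norm_nonneg _) _)
            hgi.summable, hgi.tsum_eq]
      _ = ENNReal.ofReal ((M * ‖g‖) ^ (2 : ℝ)) := by
          rw [← ENNReal.ofReal_mul (Real.rpow_nonneg hM0 _),
            ← Real.mul_rpow hM0 (norm_nonneg _)]
  have hne : (∑' k, ENNReal.ofReal (‖diagF a M hM k g‖ ^ (2 : ℝ))) ≠ ⊤ :=
    (lt_of_le_of_lt key ENNReal.ofReal_lt_top).ne
  have hsum : Summable fun k => ‖diagF a M hM k g‖ ^ (2 : ℝ) := by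
    have := ENNReal.summable_toReal hne
    refine this.congr fun k => ?_
    rw [ENNReal.toReal_ofReal (Real.rpow_nonneg (norm_nonneg _) _)]
  refine ⟨hsum, ?_⟩
  rw [← ENNReal.ofReal_le_ofReal_iff (Real.rpow_nonneg (mul_nonneg hM0 (norm_nonneg _)) _),
    ENNReal.ofReal_tsum_of_nonneg (fun k => Real.rpow_nonneg (norm_nonneg _) _) hsum]
  exact key

end Aux

section Main

local notation "⟪" x ", " y "⟫" => @inner ℂ _ _ x y

/-- The key summability and norm estimate for the series defining the sesquilinear form of the
Schur multiplier. -/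
lemma key_est (a b : ℤ → lp (fun _ : ℤ => ℂ) 2) (Ma Mb : ℝ)
    (hMa : ∀ i, ‖a i‖ ≤ Ma) (hMb : ∀ i, ‖b i‖ ≤ Mb)
    (T : lp H 2 →L[ℂ] lp K 2) (f : lp H 2) (g : lp K 2) :
    Summable (fun k => ⟪T (diagF b Mb hMb k f), diagF a Ma hMa k g⟫) ∧
      ‖∑' k, ⟪T (diagF b Mb hMb k f), diagF a Ma hMa k g⟫‖ ≤ Ma * Mb * ‖T‖ * ‖f‖ * ‖g‖ := by
  have hMa0 : 0 ≤ Ma := le_trans (norm_nonneg _) (hMa 0)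
  have hMb0 : 0 ≤ Mb := le_trans (norm_nonneg _) (hMb 0)
  obtain ⟨hsb, hbb⟩ := diagF_est b Mb hMb f
  obtain ⟨hsa, hba⟩ := diagF_est a Ma hMa g
  have h2 : (2 : ℝ≥0∞).toReal = (2 : ℝ) := by norm_num
  have hp : 0 < (2 : ℝ≥0∞).toReal := by norm_num
  have hYmem : Memℓp (fun k => ‖diagF b Mb hMb k f‖) 2 :=
    memℓp_gen (by simpa only [h2, norm_norm] using hsb)
  have hXmem : Memℓp (fun k => ‖diagF a Ma hMa k g‖) 2 :=
    memℓp_gen (by simpa only [h2, norm_norm] using hsa)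
  let Y : lp (fun _ : ℤ => ℝ) 2 := ⟨fun k => ‖diagF b Mb hMb k f‖, hYmem⟩
  let X : lp (fun _ : ℤ => ℝ) 2 := ⟨fun k => ‖diagF a Ma hMa k g‖, hXmem⟩
  have hYnorm : ‖Y‖ ≤ Mb * ‖f‖ :=
    lp.norm_le_of_tsum_le hp (mul_nonneg hMb0 (norm_nonneg _))
      (by simpa only [h2, norm_norm, Y] using hbb)
  have hXnorm : ‖X‖ ≤ Ma * ‖g‖ :=
    lp.norm_le_of_tsum_le hp (mul_nonneg hMa0 (norm_nonneg _))
      (by simpa only [h2, norm_norm, X] using hba)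
  obtain ⟨hXY, hXYle⟩ :=
    lp.tsum_mul_le_mul_norm (by rw [Real.holderConjugate_iff]; norm_num) Y X
  have hYk : ∀ k, ‖Y k‖ = ‖diagF b Mb hMb k f‖ := fun k => norm_norm _
  have hXk : ∀ k, ‖X k‖ = ‖diagF a Ma hMa k g‖ := fun k => norm_norm _
  have hXY' : Summable fun k => ‖diagF b Mb hMb k f‖ * ‖diagF a Ma hMa k g‖ := by
    simpa only [hYk, hXk] using hXY
  have hXYle' : (∑' k, ‖diagF b Mb hMb k f‖ * ‖diagF a Ma hMa k g‖)
      ≤ (Mb * ‖f‖) * (Ma * ‖g‖) := by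
    refine le_trans ?_ (mul_le_mul hYnorm hXnorm (norm_nonneg _)
      (mul_nonneg hMb0 (norm_nonneg _)))
    simpa only [hYk, hXk] using hXYle
  have hbound : ∀ k, ‖⟪T (diagF b Mb hMb k f), diagF a Ma hMa k g⟫‖
      ≤ ‖T‖ * (‖diagF b Mb hMb k f‖ * ‖diagF a Ma hMa k g‖) := by
    intro k
    calc ‖⟪T (diagF b Mb hMb k f), diagF a Ma hMa k g⟫‖
        ≤ ‖T (diagF b Mb hMb k f)‖ * ‖diagF a Ma hMa k g‖ := norm_inner_le_norm _ _
      _ ≤ (‖T‖ * ‖diagF b Mb hMb k f‖) * ‖diagF a Ma hMa k g‖ :=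
          mul_le_mul_of_nonneg_right (T.le_opNorm _) (norm_nonneg _)
      _ = ‖T‖ * (‖diagF b Mb hMb k f‖ * ‖diagF a Ma hMa k g‖) := by ring
  have hts : Summable fun k => ‖⟪T (diagF b Mb hMb k f), diagF a Ma hMa k g⟫‖ :=
    Summable.of_nonneg_of_le (fun k => norm_nonneg _) hbound (hXY'.mul_left ‖T‖)
  refine ⟨Summable.of_norm hts, ?_⟩
  calc ‖∑' k, ⟪T (diagF b Mb hMb k f), diagF a Ma hMa k g⟫‖
      ≤ ∑' k, ‖⟪T (diagF b Mb hMb k f), diagF a Ma hMa k g⟫‖ := norm_tsum_le_tsum_norm hts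
    _ ≤ ∑' k, ‖T‖ * (‖diagF b Mb hMb k f‖ * ‖diagF a Ma hMa k g‖) :=
        Summable.tsum_le_tsum hbound hts (hXY'.mul_left ‖T‖)
    _ = ‖T‖ * ∑' k, ‖diagF b Mb hMb k f‖ * ‖diagF a Ma hMa k g‖ := tsum_mul_left
    _ ≤ ‖T‖ * ((Mb * ‖f‖) * (Ma * ‖g‖)) := mul_le_mul_of_nonneg_left hXYle' (norm_nonneg T)
    _ = Ma * Mb * ‖T‖ * ‖f‖ * ‖g‖ := by ring

/-- (Grothendieck)  If `φ(i,j) = ⟪a(i), b(j)⟫` for uniformly ℓ²-bounded families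
`a, b : ℤ → ℓ²(ℤ)`, then for every bounded operator `T : ⊕ H_i → ⊕ K_i` there is a unique
bounded operator `S` with matrix entries `S_{ij} = φ(i,j)·T_{ij}`, and
`‖S‖ ≤ (sup_i ‖a(i)‖)·(sup_i ‖b(i)‖)·‖T‖`. -/
theorem statement6 (a b : ℤ → lp (fun _ : ℤ => ℂ) 2)
    (ha : BddAbove (Set.range fun i => ‖a i‖)) (hb : BddAbove (Set.range fun i => ‖b i‖))
    (T : lp H 2 →L[ℂ] lp K 2) :
    ∃ S : lp H 2 →L[ℂ] lp K 2,
      (∀ (i j : ℤ) (v : H j),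
        matrixEntry S i j v = (inner ℂ (a i) (b j) : ℂ) • matrixEntry T i j v) ∧
      ‖S‖ ≤ (⨆ i, ‖a i‖) * (⨆ i, ‖b i‖) * ‖T‖ ∧
      ∀ S' : lp H 2 →L[ℂ] lp K 2,
        (∀ (i j : ℤ) (v : H j),
          matrixEntry S' i j v = (inner ℂ (a i) (b j) : ℂ) • matrixEntry T i j v) → S' = S := by
  classical
  have hMa : ∀ i, ‖a i‖ ≤ ⨆ i, ‖a i‖ := fun i => le_ciSup ha i
  have hMb : ∀ i, ‖b i‖ ≤ ⨆ i, ‖b i‖ := fun i => le_ciSup hb i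
  set Ma := ⨆ i, ‖a i‖ with hMa_def
  set Mb := ⨆ i, ‖b i‖ with hMb_def
  have hMa0 : (0 : ℝ) ≤ Ma := le_trans (norm_nonneg _) (hMa 0)
  have hMb0 : (0 : ℝ) ≤ Mb := le_trans (norm_nonneg _) (hMb 0)
  have key := fun (f : lp H 2) (g : lp K 2) => key_est a b Ma Mb hMa hMb T f g
  have hC0 : (0 : ℝ) ≤ Ma * Mb * ‖T‖ := by positivity
  -- the dual functional of `S f`
  let L : lp H 2 → (lp K 2 →L[ℂ] ℂ) := fun f =>
    LinearMap.mkContinuous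
      { toFun := fun g => ∑' k, ⟪T (diagF b Mb hMb k f), diagF a Ma hMa k g⟫
        map_add' := fun g g' => by
          rw [← Summable.tsum_add (key f g).1 (key f g').1]
          exact tsum_congr fun k => by rw [diagF_add, inner_add_right]
        map_smul' := fun c g => by
          simp only [RingHom.id_apply, smul_eq_mul]
          refine Eq.trans (tsum_congr fun k => ?_) tsum_mul_left
          rw [diagF_smul, inner_smul_right] }
      (Ma * Mb * ‖T‖ * ‖f‖)
      (fun g => (key f g).2)
  let S₀ : lp H 2 → lp K 2 := fun f => (InnerProductSpace.toDual ℂ (lp K 2)).symm (L f)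
  have hS₀ : ∀ f g, ⟪S₀ f, g⟫ = ∑' k, ⟪T (diagF b Mb hMb k f), diagF a Ma hMa k g⟫ :=
    fun f g => InnerProductSpace.toDual_symm_apply
  have hS₀norm : ∀ f, ‖S₀ f‖ ≤ Ma * Mb * ‖T‖ * ‖f‖ := fun f => by
    rw [show S₀ f = (InnerProductSpace.toDual ℂ (lp K 2)).symm (L f) from rfl,
      LinearIsometryEquiv.norm_map]
    exact LinearMap.mkContinuous_norm_le _ (by positivity) _
  have hS₀add : ∀ f f', S₀ (f + f') = S₀ f + S₀ f' := by
    intro f f'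
    refine ext_inner_right ℂ fun g => ?_
    rw [inner_add_left, hS₀, hS₀, hS₀, ← Summable.tsum_add (key f g).1 (key f' g).1]
    exact tsum_congr fun k => by rw [diagF_add, map_add, inner_add_left]
  have hS₀smul : ∀ (c : ℂ) f, S₀ (c • f) = c • S₀ f := by
    intro c f
    refine ext_inner_right ℂ fun g => ?_
    calc ⟪S₀ (c • f), g⟫
        = ∑' k, ⟪T (diagF b Mb hMb k (c • f)), diagF a Ma hMa k g⟫ := hS₀ _ _
      _ = ∑' k, conj c * ⟪T (diagF b Mb hMb k f), diagF a Ma hMa k g⟫ :=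
          tsum_congr fun k => by rw [diagF_smul, map_smul, inner_smul_left]
      _ = conj c * ∑' k, ⟪T (diagF b Mb hMb k f), diagF a Ma hMa k g⟫ := tsum_mul_left
      _ = ⟪c • S₀ f, g⟫ := by rw [inner_smul_left, hS₀]
  let S : lp H 2 →L[ℂ] lp K 2 :=
    LinearMap.mkContinuous
      { toFun := S₀, map_add' := hS₀add, map_smul' := hS₀smul } (Ma * Mb * ‖T‖) hS₀norm
  have hSinner : ∀ f g, ⟪S f, g⟫ = ∑' k, ⟪T (diagF b Mb hMb k f), diagF a Ma hMa k g⟫ :=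
    fun f g => hS₀ f g
  have hent : ∀ (i j : ℤ) (v : H j),
      matrixEntry S i j v = (inner ℂ (a i) (b j) : ℂ) • matrixEntry T i j v := by
    intro i j v
    refine ext_inner_right ℂ fun w => ?_
    calc ⟪matrixEntry S i j v, w⟫
        = ⟪S (lp.single 2 j v), lp.single 2 i w⟫ := (lp.inner_single_right _ _ _).symm
      _ = ∑' k, ⟪T (diagF b Mb hMb k (lp.single 2 j v)),
            diagF a Ma hMa k (lp.single 2 i w)⟫ := hSinner _ _
      _ = ∑' k, (conj (b j k) * a i k) * ⟪matrixEntry T i j v, w⟫ := by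
          refine tsum_congr fun k => ?_
          rw [diagF_single, diagF_single, lp.single_smul, map_smul, inner_smul_left,
            lp.inner_single_right, inner_smul_right,
            show matrixEntry T i j v = T (lp.single 2 j v) i from rfl]
          ring
      _ = (∑' k, conj (b j k) * a i k) * ⟪matrixEntry T i j v, w⟫ := tsum_mul_right
      _ = ⟪b j, a i⟫ * ⟪matrixEntry T i j v, w⟫ := by
          rw [lp.inner_eq_tsum]
          simp only [RCLike.inner_apply]
          congr 1
          exact tsum_congr fun k => mul_comm _ _
      _ = ⟪(inner ℂ (a i) (b j) : ℂ) • matrixEntry T i j v, w⟫ := by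
          rw [inner_smul_left, inner_conj_symm]
  refine ⟨S, hent, ?_, ?_⟩
  · exact LinearMap.mkContinuous_norm_le _ hC0 _
  · intro S' hS'
    have hsingle : ∀ (j : ℤ) (v : H j), S' (lp.single 2 j v) = S (lp.single 2 j v) := by
      intro j v
      apply lp.ext
      funext i
      exact (hS' i j v).trans (hent i j v).symm
    refine ContinuousLinearMap.ext fun f => ?_
    have hf : HasSum (fun j => lp.single 2 j (f j)) f :=
      lp.hasSum_single (by norm_num) f
    have h1 := hf.mapL S'
    have h2 := hf.mapL S
    rw [show (fun j => S' (lp.single 2 j (f j))) = fun j => S (lp.single 2 j (f j)) from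
      funext fun j => hsingle j (f j)] at h1
    exact h1.unique h2

end Main
end

section
/- Let t ∈ (0,1]. The series Σ_{k=1}^∞ 1/([k/2]_t)² converges and satisfies Σ_{k=1}^∞ 1/([k/2]_t)² ≤ π²·(t^{1/2} + t^{−1/2})²/6. -/
/-- The `q`-number `[a]_t = (t^a - t^{-a})/(t - t⁻¹)` for `t ≠ 1`, and `a` for `t = 1`. -/
noncomputable def qNum (t a : ℝ) : ℝ :=
  if t = 1 then a else (t ^ a - t ^ (-a)) / (t - t⁻¹)

lemma geom_aux (y : ℝ) (hy : 1 < y) : ∀ n : ℕ, (n : ℝ) * (y - y⁻¹) ≤ y ^ n - (y ^ n)⁻¹ := by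
  have hy0 : 0 < y := lt_trans one_pos hy
  intro n
  induction n with
  | zero => simp
  | succ n ih =>
    have hpn : 1 ≤ y ^ n := one_le_pow₀ hy.le
    have hpn1 : 1 ≤ y ^ (n + 1) := one_le_pow₀ hy.le
    have hinv : (y ^ (n + 1))⁻¹ ≤ 1 := inv_le_one_of_one_le₀ hpn1
    have hkey : 0 ≤ (y ^ n - 1) * (1 - (y ^ (n + 1))⁻¹) :=
      mul_nonneg (by linarith) (by linarith)
    have hmul : y ^ n * (y ^ n)⁻¹ = 1 := mul_inv_cancel₀ (by positivity)
    have hyc : y * y⁻¹ = 1 := mul_inv_cancel₀ hy0.ne'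
    have hsplit : y ^ (n + 1) = y ^ n * y := by ring
    have hsplit' : (y ^ (n + 1))⁻¹ = (y ^ n)⁻¹ * y⁻¹ := by rw [hsplit, mul_inv]
    have hbc : y ^ n * (y ^ (n + 1))⁻¹ = y⁻¹ := by
      rw [hsplit', ← mul_assoc, hmul, one_mul]
    have hkey' : 0 ≤ y ^ n - y⁻¹ - 1 + (y ^ (n + 1))⁻¹ := by nlinarith [hkey, hbc]
    have h1c : 1 + y⁻¹ ≤ y ^ n + (y ^ (n + 1))⁻¹ := by linarith
    have hstep : y - y⁻¹ ≤ (y - 1) * (y ^ n + (y ^ (n + 1))⁻¹) := by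
      have h := mul_le_mul_of_nonneg_left h1c (by linarith : (0:ℝ) ≤ y - 1)
      nlinarith [h, hyc]
    have hfin : y ^ (n + 1) - (y ^ (n + 1))⁻¹ - (y ^ n - (y ^ n)⁻¹)
        = (y - 1) * (y ^ n + (y ^ (n + 1))⁻¹) := by
      have hyn : (y : ℝ) ^ n ≠ 0 := by positivity
      field_simp
      ring
    push_cast
    linarith [ih, hstep, hfin.ge, hfin.le]

theorem qNum_lower (t : ℝ) (ht0 : 0 < t) (ht1 : t ≤ 1) (k : ℕ) :
    ((k : ℝ) + 1) / (t ^ ((1 : ℝ) / 2) + t ^ (-(1 : ℝ) / 2)) ≤ qNum t (((k : ℝ) + 1) / 2) := by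
  have hz0 : 0 < t ^ ((1 : ℝ) / 2) := Real.rpow_pos_of_pos ht0 _
  have hzinv : t ^ (-(1 : ℝ) / 2) = (t ^ ((1 : ℝ) / 2))⁻¹ := by
    rw [neg_div, Real.rpow_neg ht0.le]
  by_cases h1 : t = 1
  · subst h1
    simp only [qNum, if_pos rfl, Real.one_rpow]
    norm_num
  · set z : ℝ := t ^ ((1 : ℝ) / 2) with hz
    have hz1 : z < 1 := Real.rpow_lt_one ht0.le (lt_of_le_of_ne ht1 h1) (by norm_num)
    set y : ℝ := z⁻¹ with hyd
    have hy : 1 < y := (one_lt_inv₀ hz0).2 hz1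
    have hy0 : 0 < y := lt_trans one_pos hy
    have hnum : t ^ (((k : ℝ) + 1) / 2) = z ^ (k + 1) := by
      rw [hz, ← Real.rpow_natCast (t ^ ((1:ℝ)/2)) (k + 1), ← Real.rpow_mul ht0.le]
      congr 1
      push_cast
      ring
    have hnum' : t ^ (-(((k : ℝ) + 1) / 2)) = (z ^ (k + 1))⁻¹ := by
      rw [Real.rpow_neg ht0.le, hnum]
    have ht2 : t = z ^ 2 := by
      rw [hz, ← Real.rpow_natCast (t ^ ((1:ℝ)/2)) 2, ← Real.rpow_mul ht0.le]
      norm_num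
    have hzinv2 : t⁻¹ = (z ^ 2)⁻¹ := by rw [ht2]
    rw [qNum, if_neg h1, hnum, hnum', hzinv2]
    nth_rewrite 2 [ht2]
    -- rewrite z-powers in terms of y
    have hzy : ∀ m : ℕ, z ^ m = (y ^ m)⁻¹ := by
      intro m; rw [hyd, inv_pow, inv_inv]
    have heq : (z ^ (k + 1) - (z ^ (k + 1))⁻¹) / (z ^ 2 - (z ^ 2)⁻¹)
        = (y ^ (k + 1) - (y ^ (k + 1))⁻¹) / (y ^ 2 - (y ^ 2)⁻¹) := by
      rw [hzy (k + 1), hzy 2, inv_inv, inv_inv, ← neg_sub (y ^ (k+1)), ← neg_sub (y ^ 2),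
        neg_div_neg_eq]
    rw [heq]
    have hC : z + z⁻¹ = y + y⁻¹ := by rw [hyd, inv_inv, add_comm]
    rw [hzinv, hC]
    have hCpos : 0 < y + y⁻¹ := by positivity
    have hD : y ^ 2 - (y ^ 2)⁻¹ = (y - y⁻¹) * (y + y⁻¹) := by
      rw [inv_pow]; ring
    have hDpos : 0 < y ^ 2 - (y ^ 2)⁻¹ := by
      rw [hD]
      have : 0 < y - y⁻¹ := by
        have : y⁻¹ < 1 := (inv_lt_one₀ hy0).2 hy
        linarith
      positivity
    rw [div_le_div_iff₀ hCpos hDpos]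
    have hgeom := geom_aux y hy (k + 1)
    push_cast at hgeom ⊢
    calc ((k : ℝ) + 1) * (y ^ 2 - (y ^ 2)⁻¹)
        = (((k : ℝ) + 1) * (y - y⁻¹)) * (y + y⁻¹) := by rw [hD]; ring
      _ ≤ (y ^ (k + 1) - (y ^ (k + 1))⁻¹) * (y + y⁻¹) :=
          mul_le_mul_of_nonneg_right hgeom hCpos.le

/-- For `t ∈ (0,1]`, the series `Σ_{k=1}^∞ 1/([k/2]_t)²` converges and is bounded above by
`π²·(t^{1/2} + t^{−1/2})²/6`. -/
theorem statement8 (t : ℝ) (ht0 : 0 < t) (ht1 : t ≤ 1) :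
    Summable (fun k : ℕ => 1 / (qNum t (((k : ℝ) + 1) / 2)) ^ 2) ∧
    ∑' k : ℕ, 1 / (qNum t (((k : ℝ) + 1) / 2)) ^ 2 ≤
      Real.pi ^ 2 * (t ^ ((1 : ℝ) / 2) + t ^ (-(1 : ℝ) / 2)) ^ 2 / 6 := by
  set C : ℝ := t ^ ((1 : ℝ) / 2) + t ^ (-(1 : ℝ) / 2) with hCdef
  have hC0 : 0 < C := by
    have := Real.rpow_pos_of_pos ht0 ((1:ℝ)/2)
    have := Real.rpow_pos_of_pos ht0 (-(1:ℝ)/2)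
    positivity
  have hq : ∀ k : ℕ, ((k : ℝ) + 1) / C ≤ qNum t (((k : ℝ) + 1) / 2) :=
    fun k => qNum_lower t ht0 ht1 k
  have hqpos : ∀ k : ℕ, 0 < qNum t (((k : ℝ) + 1) / 2) := by
    intro k
    refine lt_of_lt_of_le ?_ (hq k)
    positivity
  have hbound : ∀ k : ℕ, 1 / (qNum t (((k : ℝ) + 1) / 2)) ^ 2
      ≤ C ^ 2 * (1 / ((k : ℝ) + 1) ^ 2) := by
    intro k
    have h1 : 0 < ((k : ℝ) + 1) / C := by positivity
    have h2 : (((k : ℝ) + 1) / C) ^ 2 ≤ (qNum t (((k : ℝ) + 1) / 2)) ^ 2 :=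
      pow_le_pow_left₀ h1.le (hq k) 2
    have h3 : 1 / (qNum t (((k : ℝ) + 1) / 2)) ^ 2 ≤ 1 / (((k : ℝ) + 1) / C) ^ 2 :=
      one_div_le_one_div_of_le (by positivity) h2
    refine h3.trans_eq ?_
    rw [div_pow, one_div_div]
    ring
  have hbase : Summable (fun k : ℕ => 1 / ((k : ℝ) + 1) ^ 2) := by
    have h := (summable_nat_add_iff 1).2 hasSum_zeta_two.summable
    refine h.congr fun n => ?_
    push_cast
    ring
  have hsummul : Summable (fun k : ℕ => C ^ 2 * (1 / ((k : ℝ) + 1) ^ 2)) :=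
    hbase.mul_left _
  have hsum : Summable (fun k : ℕ => 1 / (qNum t (((k : ℝ) + 1) / 2)) ^ 2) :=
    Summable.of_nonneg_of_le (fun k => by positivity) hbound hsummul
  refine ⟨hsum, ?_⟩
  have htsum : ∑' k : ℕ, 1 / ((k : ℝ) + 1) ^ 2 = Real.pi ^ 2 / 6 := by
    have e1 := Summable.tsum_eq_zero_add hasSum_zeta_two.summable
    rw [hasSum_zeta_two.tsum_eq] at e1
    simp only [Nat.cast_zero, ne_eq, OfNat.ofNat_ne_zero, not_false_eq_true, zero_pow,
      div_zero, zero_add] at e1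
    rw [e1]
    refine tsum_congr fun n => ?_
    push_cast
    ring
  calc ∑' k : ℕ, 1 / (qNum t (((k : ℝ) + 1) / 2)) ^ 2
      ≤ ∑' k : ℕ, C ^ 2 * (1 / ((k : ℝ) + 1) ^ 2) := Summable.tsum_le_tsum hbound hsum hsummul
    _ = C ^ 2 * (Real.pi ^ 2 / 6) := by rw [tsum_mul_left, htsum]
    _ = Real.pi ^ 2 * C ^ 2 / 6 := by ring
end

section
/- Let M ∈ ℕ. For all families (H_i)_{i∈ℤ}, (K_i)_{i∈ℤ} of complex Hilbert spaces with ℓ²-direct sums H, K, and every bounded linear operator T : H → K, there exists a bounded linear operator S : H → K whose matrix entries satisfy S_{ij} = γ_M(i,j)·T_{ij} for all i,j ∈ ℤ, and ‖S‖ ≤ ‖T‖. Here γ_M(i,j) := (M+1−|i−j|)/(M+1) if |i−j| ≤ M and γ_M(i,j) := 0 if |i−j| > M. -/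
open scoped ENNReal

/-- The Schur multiplier `γ_M(i,j) = (M+1−|i−j|)/(M+1)` for `|i−j| ≤ M`, and `0` otherwise. -/
noncomputable def gammaMul (M : ℕ) (i j : ℤ) : ℝ :=
  if |i - j| ≤ (M : ℤ) then ((M : ℝ) + 1 - |(i : ℝ) - (j : ℝ)|) / ((M : ℝ) + 1) else 0

variable {H K : ℤ → Type} [∀ i, NormedAddCommGroup (H i)] [∀ i, InnerProductSpace ℂ (H i)]
  [∀ i, CompleteSpace (H i)] [∀ i, NormedAddCommGroup (K i)] [∀ i, InnerProductSpace ℂ (K i)]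
  [∀ i, CompleteSpace (K i)]

/-!
Partition `ℤ` into the blocks `{i | (i + k) / (M + 1) = m}`, `m ∈ ℤ`, of `M + 1` consecutive
integers. For `|i - j| ≤ M`, exactly `M + 1 - |i - j|` of the shifts `k = 0, …, M` put `i` and `j`
in the same block (and none do when `|i - j| > M`), so `γ_M(i, j)` is the proportion of shifts for
which `(i, j)` lies in a diagonal block. Hence `S` is the average over the shifts of the
compressions of `T` to the block diagonal. Each compression has norm at most `‖T‖`, since the
blocks split both `ℓ²`-norms into orthogonal pieces: `‖∑ₘ Pₘ T Pₘ x‖² = ∑ₘ ‖Pₘ T Pₘ x‖²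
≤ ‖T‖² ∑ₘ ‖Pₘ x‖² = ‖T‖² ‖x‖²`.
-/

open Finset

/-- Hermite's identity for integers. -/
lemma Int.sum_range_add_ediv {N : ℕ} (hN : 0 < N) (x : ℤ) :
    ∑ k ∈ Finset.range N, (x + k) / N = x := by
  have step : ∀ y : ℤ,
      ∑ k ∈ Finset.range N, (y + 1 + k) / N = ∑ k ∈ Finset.range N, (y + k) / N + 1 := by
    intro y
    have h := (sum_range_succ' (fun k : ℕ => (y + k) / N) N).symm.trans
      (sum_range_succ (fun k : ℕ => (y + k) / N) N)
    rw [show y + N = y + 1 * N by ring, Int.add_mul_ediv_right _ _ (by positivity)] at h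
    push_cast at h
    simp only [add_assoc, add_comm (1 : ℤ), add_zero] at h ⊢
    linarith
  induction x using Int.induction_on with
  | zero =>
    refine sum_eq_zero fun k hk => Int.ediv_eq_zero_of_lt (by positivity) ?_
    simpa using mem_range.1 hk
  | succ n ih => rw [step, ih]
  | pred n ih =>
    have := step (-n - 1)
    rw [sub_add_cancel, ih] at this
    linarith

lemma Int.card_filter_add_ediv_eq_of_le {N : ℕ} (hN : 0 < N) {i j : ℤ} (hji : j ≤ i) :
    #((Finset.range N).filter fun k : ℕ => (i + k) / N = (j + k) / N)
      = ((N : ℤ) - (i - j)).toNat := by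
  have hN' : (0 : ℤ) < N := by exact_mod_cast hN
  have mono : ∀ k : ℕ, (j + k) / N ≤ (i + k) / N := fun k => Int.ediv_le_ediv hN' (by omega)
  rcases le_or_gt (i - j) N with hd | hd
  -- The jumps `(i + k) / N - (j + k) / N` are `0` or `1`, and by Hermite they add up to `i - j`.
  · have jump : ∀ k : ℕ, (i + k) / N ≤ (j + k) / N + 1 := fun k => by
      rw [← Int.add_mul_ediv_right _ 1 hN'.ne']
      exact Int.ediv_le_ediv hN' (by omega)
    have hsum : ((#((Finset.range N).filter fun k : ℕ => (i + k) / N = (j + k) / N) : ℕ) : ℤ)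
        = ∑ k ∈ Finset.range N, (1 - ((i + (k : ℤ)) / N - (j + k) / N)) := by
      rw [natCast_card_filter]
      refine sum_congr rfl fun k _ => ?_
      have := mono k; have := jump k
      split_ifs <;> omega
    rw [sum_sub_distrib, sum_sub_distrib, Int.sum_range_add_ediv hN, Int.sum_range_add_ediv hN]
      at hsum
    simp only [sum_const, card_range, nsmul_eq_mul, mul_one] at hsum
    omega
  · rw [show ((N : ℤ) - (i - j)).toNat = 0 by omega, card_eq_zero, filter_eq_empty_iff]
    intro k _ heq
    have : (j + k) / N + 1 ≤ (i + k) / N := by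
      rw [← Int.add_mul_ediv_right _ 1 hN'.ne']
      exact Int.ediv_le_ediv hN' (by omega)
    omega

lemma Int.card_filter_add_ediv_eq {N : ℕ} (hN : 0 < N) (i j : ℤ) :
    #((Finset.range N).filter fun k : ℕ => (i + k) / N = (j + k) / N)
      = ((N : ℤ) - |i - j|).toNat := by
  rcases le_total j i with h | h
  · rw [abs_of_nonneg (sub_nonneg.2 h), Int.card_filter_add_ediv_eq_of_le hN h]
  · simp_rw [eq_comm (a := (i + _) / _), abs_sub_comm i j]
    rw [abs_of_nonneg (sub_nonneg.2 h), Int.card_filter_add_ediv_eq_of_le hN h]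

lemma gammaMul_eq_toNat_div (M : ℕ) (i j : ℤ) :
    gammaMul M i j = (((M + 1 : ℕ) : ℤ) - |i - j|).toNat / ((M : ℝ) + 1) := by
  unfold gammaMul
  split_ifs with h
  · have hnat : ((((M + 1 : ℕ) : ℤ) - |i - j|).toNat : ℤ) = M + 1 - |i - j| :=
      Int.toNat_of_nonneg (by omega)
    have hreal : (((((M + 1 : ℕ) : ℤ) - |i - j|).toNat : ℕ) : ℝ)
        = (M : ℝ) + 1 - |(i : ℝ) - j| := by
      rw [← Int.cast_natCast, hnat]
      push_cast
      rfl
    rw [hreal]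
  · rw [Int.toNat_eq_zero.2 (by omega)]
    simp

namespace lp
variable {α β : Type*} {𝕜 : Type*} [NontriviallyNormedField 𝕜]
  {E F : α → Type*} [∀ i, NormedAddCommGroup (E i)] [∀ i, NormedSpace 𝕜 (E i)]
  [∀ i, NormedAddCommGroup (F i)] [∀ i, NormedSpace 𝕜 (F i)] {p : ℝ≥0∞}

lemma tsum_enorm_rpow [Fact (1 ≤ p)] (hp : 0 < p.toReal) (f : lp E p) :
    ∑' i, ‖f i‖ₑ ^ p.toReal = ‖f‖ₑ ^ p.toReal := by
  simp_rw [← ofReal_norm, ENNReal.ofReal_rpow_of_nonneg (norm_nonneg _) hp.le,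
    norm_rpow_eq_tsum hp]
  exact (ENNReal.ofReal_tsum_of_nonneg (fun i => by positivity) ((lp.memℓp f).summable hp)).symm

lemma _root_.memℓp_of_tsum_enorm_rpow_ne_top (hp : 0 < p.toReal) {f : ∀ i, E i}
    (hf : ∑' i, ‖f i‖ₑ ^ p.toReal ≠ ∞) : Memℓp f p := by
  refine memℓp_gen ((ENNReal.summable_toReal hf).congr fun i => ?_)
  rw [← ofReal_norm, ENNReal.ofReal_rpow_of_nonneg (norm_nonneg _) hp.le,
    ENNReal.toReal_ofReal (by positivity)]

variable (𝕜) in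
open scoped Classical in
noncomputable def restrict (s : Set α) : lp E p →ₗ[𝕜] lp E p where
  toFun f := ⟨fun i => if i ∈ s then f i else 0,
    (lp.memℓp f).mono' fun i => by split_ifs <;> simp⟩
  map_add' f g := by ext i; simp only [coeFn_add, Pi.add_apply]; split_ifs <;> simp
  map_smul' c f := by ext i; simp only [coeFn_smul, Pi.smul_apply]; split_ifs <;> simp

open scoped Classical in
lemma restrict_apply (s : Set α) (f : lp E p) (i : α) :
    restrict 𝕜 s f i = if i ∈ s then f i else 0 := rfl

lemma tsum_enorm_rpow_restrict_preimage [Fact (1 ≤ p)] (hp : 0 < p.toReal) (b : α → β)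
    (f : lp E p) : ∑' m, ‖restrict 𝕜 (b ⁻¹' {m}) f‖ₑ ^ p.toReal = ‖f‖ₑ ^ p.toReal := by
  classical
  have hfiber : ∀ m i, ‖restrict 𝕜 (b ⁻¹' {m}) f i‖ₑ ^ p.toReal
      = if b i = m then ‖f i‖ₑ ^ p.toReal else 0 := fun m i => by
    rw [restrict_apply]
    split_ifs <;> simp_all [ENNReal.zero_rpow_of_pos hp]
  simp_rw [← tsum_enorm_rpow hp, hfiber]
  rw [ENNReal.tsum_comm]
  exact tsum_congr fun i => (tsum_congr fun m => if_congr eq_comm rfl rfl).trans (tsum_ite_eq _ _)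

open scoped Classical in
lemma restrict_single [DecidableEq α] (s : Set α) (j : α) (v : E j) :
    restrict 𝕜 s (lp.single p j v) = if j ∈ s then lp.single p j v else 0 := by
  ext i
  rw [restrict_apply]
  by_cases hij : i = j
  · subst hij; split_ifs <;> simp
  · split_ifs <;> simp [hij]

variable [Fact (1 ≤ p)]

lemma tsum_enorm_rpow_compress_le (hp : 0 < p.toReal) (b : α → β) (T : lp E p →L[𝕜] lp F p)
    (x : lp E p) :
    ∑' i, ‖T (restrict 𝕜 (b ⁻¹' {b i}) x) i‖ₑ ^ p.toReal ≤ (‖T‖ₑ * ‖x‖ₑ) ^ p.toReal := by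
  calc ∑' i, ‖T (restrict 𝕜 (b ⁻¹' {b i}) x) i‖ₑ ^ p.toReal
      = ∑' (m) (i : b ⁻¹' {m}), ‖T (restrict 𝕜 (b ⁻¹' {m}) x) i‖ₑ ^ p.toReal := by
        rw [← ENNReal.tsum_fiberwise _ b]
        exact tsum_congr fun m => tsum_congr fun i => by rw [i.2]
    _ ≤ ∑' m, ‖T (restrict 𝕜 (b ⁻¹' {m}) x)‖ₑ ^ p.toReal := by
        gcongr with m
        rw [← tsum_enorm_rpow hp]
        exact ENNReal.tsum_comp_le_tsum_of_injective Subtype.coe_injective _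
    _ ≤ ∑' m, (‖T‖ₑ * ‖restrict 𝕜 (b ⁻¹' {m}) x‖ₑ) ^ p.toReal := by
        gcongr with m
        exact T.le_opENorm _
    _ = (‖T‖ₑ * ‖x‖ₑ) ^ p.toReal := by
        simp_rw [ENNReal.mul_rpow_of_nonneg _ _ hp.le]
        rw [ENNReal.tsum_mul_left, tsum_enorm_rpow_restrict_preimage hp]

lemma memℓp_compress (hp : 0 < p.toReal) (b : α → β) (T : lp E p →L[𝕜] lp F p) (x : lp E p) :
    Memℓp (fun i => T (restrict 𝕜 (b ⁻¹' {b i}) x) i) p :=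
  memℓp_of_tsum_enorm_rpow_ne_top hp <| ne_top_of_le_ne_top
    (ENNReal.rpow_ne_top_of_nonneg hp.le (ENNReal.mul_ne_top enorm_ne_top enorm_ne_top))
    (tsum_enorm_rpow_compress_le hp b T x)

noncomputable def blockCompression (hp : 0 < p.toReal) (b : α → β) (T : lp E p →L[𝕜] lp F p) :
    lp E p →L[𝕜] lp F p :=
  LinearMap.mkContinuous
    { toFun x := ⟨fun i => T (restrict 𝕜 (b ⁻¹' {b i}) x) i, memℓp_compress hp b T x⟩
      map_add' x y := by ext i; simp only [map_add, coeFn_add, Pi.add_apply]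
      map_smul' c x := by ext i; simp only [map_smul, coeFn_smul, Pi.smul_apply]; rfl }
    ‖T‖ fun x => by
      set y : lp F p := ⟨_, memℓp_compress hp b T x⟩
      have h : ‖y‖ₑ ≤ ‖T‖ₑ * ‖x‖ₑ := by
        rw [← ENNReal.rpow_le_rpow_iff hp, ← tsum_enorm_rpow hp]
        exact tsum_enorm_rpow_compress_le hp b T x
      calc ‖y‖ = ‖y‖ₑ.toReal := (toReal_enorm y).symm
        _ ≤ (‖T‖ₑ * ‖x‖ₑ).toReal := ENNReal.toReal_mono (by finiteness) h
        _ = ‖T‖ * ‖x‖ := by rw [ENNReal.toReal_mul, toReal_enorm, toReal_enorm]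

lemma norm_blockCompression_le (hp : 0 < p.toReal) (b : α → β) (T : lp E p →L[𝕜] lp F p) :
    ‖blockCompression hp b T‖ ≤ ‖T‖ :=
  LinearMap.mkContinuous_norm_le _ (norm_nonneg T) _

lemma blockCompression_single [DecidableEq α] [DecidableEq β] (hp : 0 < p.toReal) (b : α → β)
    (T : lp E p →L[𝕜] lp F p) (i j : α) (v : E j) :
    blockCompression hp b T (lp.single p j v) i
      = if b i = b j then T (lp.single p j v) i else 0 := by
  change T (restrict 𝕜 (b ⁻¹' {b i}) (lp.single p j v)) i = _
  rw [restrict_single]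
  by_cases h : b i = b j
  · simp [h]
  · have h' : b j ≠ b i := Ne.symm h
    simp [h, h']

end lp

lemma norm_inv_natCast_smul_sum_le {𝕜 E : Type*} [RCLike 𝕜] [SeminormedAddCommGroup E]
    [NormedSpace 𝕜 E] {n : ℕ} {f : ℕ → E} {C : ℝ} (hC : 0 ≤ C) (hf : ∀ k, ‖f k‖ ≤ C) :
    ‖(n : 𝕜)⁻¹ • ∑ k ∈ range n, f k‖ ≤ C := by
  rcases n.eq_zero_or_pos with rfl | hn
  · simpa using hC
  calc ‖(n : 𝕜)⁻¹ • ∑ k ∈ range n, f k‖ ≤ (n : ℝ)⁻¹ * ∑ k ∈ range n, ‖f k‖ := by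
        rw [norm_smul, norm_inv, RCLike.norm_natCast]
        gcongr
        exact norm_sum_le _ _
    _ ≤ (n : ℝ)⁻¹ * (n * C) := by
        gcongr
        simpa using sum_le_sum fun k (_ : k ∈ range n) => hf k
    _ = C := by field_simp

/-- For `M ∈ ℕ`, every bounded operator `T : ⊕_{i∈ℤ} H_i → ⊕_{i∈ℤ} K_i` between ℓ²-direct
sums of Hilbert spaces admits a bounded operator `S` with matrix entries
`S_{ij} = γ_M(i,j)·T_{ij}` and `‖S‖ ≤ ‖T‖`. -/
theorem statement9 (M : ℕ) (T : lp H 2 →L[ℂ] lp K 2) :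
    ∃ S : lp H 2 →L[ℂ] lp K 2,
      (∀ (i j : ℤ) (v : H j),
        matrixEntry S i j v = (gammaMul M i j : ℂ) • matrixEntry T i j v) ∧
      ‖S‖ ≤ ‖T‖ := by
  have hp : 0 < (2 : ℝ≥0∞).toReal := by norm_num
  let B (k : ℕ) := lp.blockCompression hp (fun i : ℤ => (i + k) / (M + 1 : ℕ)) T
  -- Naming `𝕜` and `E` spares the elaborator a costly unification of the norm instances.
  have hnorm : ‖((M + 1 : ℕ) : ℂ)⁻¹ • ∑ k ∈ range (M + 1), B k‖ ≤ ‖T‖ :=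
    norm_inv_natCast_smul_sum_le (𝕜 := ℂ) (E := lp H 2 →L[ℂ] lp K 2) (f := B) (norm_nonneg T)
      fun k => lp.norm_blockCompression_le hp _ T
  refine ⟨_, fun i j v => ?_, hnorm⟩
  have hentry : matrixEntry (((M + 1 : ℕ) : ℂ)⁻¹ • ∑ k ∈ range (M + 1), B k) i j v
      = ((M + 1 : ℕ) : ℂ)⁻¹ • ∑ k ∈ range (M + 1),
          if (i + k) / (M + 1 : ℕ) = (j + k) / (M + 1 : ℕ) then matrixEntry T i j v else 0 := by
    simp only [matrixEntry, smul_apply, _root_.sum_apply,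
      lp.coeFn_smul, lp.coeFn_sum, Pi.smul_apply, Finset.sum_apply, B,
      lp.blockCompression_single]
  rw [hentry, ← sum_filter, sum_const, Int.card_filter_add_ediv_eq (Nat.succ_pos M),
    gammaMul_eq_toNat_div, ← Nat.cast_smul_eq_nsmul ℂ, smul_smul]
  congr 1
  push_cast
  ring
end

section
/- Let q ∈ (0,1], let n ≥ 1 be an integer, and let N, M ∈ ℕ with M ≥ n. Then |1 − (1/(M+1))·Σ_{r=N}^{N+M−n} √(⟨n+r+1⟩_q)/√(⟨r+1⟩_q)| ≤ n/(M+1) + n/(N+1). -/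
/-! The ratio `⟨r+1+n⟩_q / ⟨r+1⟩_q` is at most `1 + n/(r+1)` because `⟨·⟩_q` is a partial sum of
the antitone sequence `(q²)ⁱ`: each of the `n` new terms is at most each of the `r+1` old ones.
Taking square roots, every summand of the average lies in `[1, 1 + n/(N+1)]`, and the average has
`M - n + 1` summands against the normalisation `M + 1`, which costs at most `n/(M+1)`. -/

/-- `⟨n⟩_q := 1 + q² + q⁴ + ⋯ + q^{2(n−1)} = Σ_{i=0}^{n−1} q^{2i}`. -/
def qBracket (q : ℝ) (n : ℕ) : ℝ := ∑ i ∈ Finset.range n, q ^ (2 * i)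

open Finset

theorem Antitone.mul_sum_range_add_le {f : ℕ → ℝ} (hf : Antitone f) (m n : ℕ) :
    (m : ℝ) * ∑ i ∈ range (m + n), f i ≤ (m + n) * ∑ i ∈ range m, f i := by
  have htail : (m : ℝ) * ∑ j ∈ range n, f (m + j) ≤ n * ∑ i ∈ range m, f i :=
    calc (m : ℝ) * ∑ j ∈ range n, f (m + j) = ∑ _i ∈ range m, ∑ j ∈ range n, f (m + j) := by
          simp
      _ ≤ ∑ i ∈ range m, ∑ _j ∈ range n, f i := by
          gcongr with i hi j
          exact hf (by rw [mem_range] at hi; omega)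
      _ = n * ∑ i ∈ range m, f i := by simp [mul_sum]
  rw [sum_range_add]
  linarith

theorem abs_one_sub_average_le {ι : Type*} {s : Finset ι} {f : ι → ℝ} {a c : ℝ} (ha : 0 < a)
    (hs : (#s : ℝ) ≤ a) (hc : 0 ≤ c) (hlo : ∀ i ∈ s, 1 ≤ f i) (hhi : ∀ i ∈ s, f i ≤ 1 + c) :
    |1 - 1 / a * ∑ i ∈ s, f i| ≤ (a - #s) / a + c := by
  have hsum_lo : (#s : ℝ) / a ≤ (∑ i ∈ s, f i) / a := by
    gcongr
    simpa using card_nsmul_le_sum s f 1 hlo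
  have hsum_hi : (∑ i ∈ s, f i) / a ≤ 1 + c := by
    rw [div_le_iff₀ ha]
    calc ∑ i ∈ s, f i ≤ #s • (1 + c) := sum_le_card_nsmul s f (1 + c) hhi
      _ ≤ (1 + c) * a := by rw [nsmul_eq_mul, mul_comm]; gcongr
  have hdefect : (a - #s) / a = 1 - #s / a := by rw [sub_div, div_self ha.ne']
  have hcard : (#s : ℝ) / a ≤ 1 := (div_le_one ha).mpr hs
  rw [one_div_mul_eq_div, hdefect, abs_le]
  constructor <;> linarith

theorem qBracket_eq_sum_sq_pow (q : ℝ) (n : ℕ) : qBracket q n = ∑ i ∈ range n, (q ^ 2) ^ i := by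
  simp only [qBracket, pow_mul]

theorem one_le_qBracket_succ (q : ℝ) (m : ℕ) : 1 ≤ qBracket q (m + 1) := by
  rw [qBracket_eq_sum_sq_pow, sum_range_succ']
  simpa using sum_nonneg fun i _ ↦ pow_nonneg (sq_nonneg q) (i + 1)

theorem qBracket_succ_pos (q : ℝ) (m : ℕ) : 0 < qBracket q (m + 1) :=
  one_pos.trans_le (one_le_qBracket_succ q m)

theorem qBracket_mono (q : ℝ) : Monotone (qBracket q) := fun _ _ h ↦ by
  simp only [qBracket_eq_sum_sq_pow]
  exact sum_le_sum_of_subset_of_nonneg (range_mono h)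
    fun i _ _ ↦ pow_nonneg (sq_nonneg q) i

theorem qBracket_add_le {q : ℝ} (hq : q ^ 2 ≤ 1) (m n : ℕ) :
    (m : ℝ) * qBracket q (m + n) ≤ (m + n) * qBracket q m := by
  simp only [qBracket_eq_sum_sq_pow]
  exact (pow_right_anti₀ (sq_nonneg q) hq).mul_sum_range_add_le m n

theorem one_le_qBracket_div (q : ℝ) (n r : ℕ) :
    1 ≤ qBracket q (n + r + 1) / qBracket q (r + 1) :=
  (one_le_div (qBracket_succ_pos q r)).mpr (qBracket_mono q (by omega))

theorem qBracket_div_le {q : ℝ} (hq : q ^ 2 ≤ 1) (n r : ℕ) :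
    qBracket q (n + r + 1) / qBracket q (r + 1) ≤ 1 + n / (r + 1) := by
  have h := qBracket_add_le hq (r + 1) n
  rw [show n + r + 1 = r + 1 + n by omega, div_le_iff₀ (qBracket_succ_pos q r),
    one_add_div (by positivity), div_mul_eq_mul_div, le_div_iff₀ (by positivity)]
  push_cast at h
  linarith

theorem one_le_sqrt_qBracket_div (q : ℝ) (n r : ℕ) :
    1 ≤ √(qBracket q (n + r + 1)) / √(qBracket q (r + 1)) := by
  rw [← Real.sqrt_div' _ (qBracket_succ_pos q r).le, Real.one_le_sqrt]
  exact one_le_qBracket_div q n r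

theorem sqrt_qBracket_div_le {q : ℝ} (hq : q ^ 2 ≤ 1) (n r : ℕ) :
    √(qBracket q (n + r + 1)) / √(qBracket q (r + 1)) ≤ 1 + n / (r + 1) :=
  calc √(qBracket q (n + r + 1)) / √(qBracket q (r + 1))
      = √(qBracket q (n + r + 1) / qBracket q (r + 1)) :=
        (Real.sqrt_div' _ (qBracket_succ_pos q r).le).symm
    _ ≤ qBracket q (n + r + 1) / qBracket q (r + 1) :=
        Real.sqrt_le_self_iff.mpr (Or.inr (one_le_qBracket_div q n r))
    _ ≤ 1 + n / (r + 1) := qBracket_div_le hq n r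

theorem statement16_general (q : ℝ) (hq0 : 0 < q) (hq1 : q ≤ 1) (n : ℕ)
    (N M : ℕ) :
    |1 - (1 / ((M : ℝ) + 1)) *
        ∑ r ∈ Finset.Icc N (N + (M - n)),
          Real.sqrt (qBracket q (n + r + 1)) / Real.sqrt (qBracket q (r + 1))| ≤
      (n : ℝ) / ((M : ℝ) + 1) + (n : ℝ) / ((N : ℝ) + 1) := by
  have hq : q ^ 2 ≤ 1 := pow_le_one₀ hq0.le hq1
  have hcard : #(Icc N (N + (M - n))) = M - n + 1 := by simp; omega
  have hcard_le : (#(Icc N (N + (M - n))) : ℝ) ≤ M + 1 := by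
    rw [hcard]; exact_mod_cast (by omega : M - n + 1 ≤ M + 1)
  have hdefect : (M + 1 : ℝ) - #(Icc N (N + (M - n))) ≤ n := by
    rw [hcard, sub_le_iff_le_add]; exact_mod_cast (by omega : M + 1 ≤ n + (M - n + 1))
  have hhi : ∀ r ∈ Icc N (N + (M - n)),
      √(qBracket q (n + r + 1)) / √(qBracket q (r + 1)) ≤ 1 + n / (N + 1) := fun r hr ↦
    (sqrt_qBracket_div_le hq n r).trans <| by
      gcongr; exact_mod_cast (mem_Icc.mp hr).1
  calc _ ≤ ((M + 1) - #(Icc N (N + (M - n)))) / ((M : ℝ) + 1) + n / (N + 1) :=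
        abs_one_sub_average_le (by positivity) hcard_le (by positivity)
          (fun r _ ↦ one_le_sqrt_qBracket_div q n r) hhi
    _ ≤ n / ((M : ℝ) + 1) + n / (N + 1) := by gcongr

/-- For `q ∈ (0,1]`, an integer `n ≥ 1` and `N, M ∈ ℕ` with `M ≥ n`:
`|1 − (1/(M+1))·Σ_{r=N}^{N+M−n} √(⟨n+r+1⟩_q)/√(⟨r+1⟩_q)| ≤ n/(M+1) + n/(N+1)`. -/
theorem statement16 (q : ℝ) (hq0 : 0 < q) (hq1 : q ≤ 1) (n : ℕ) (hn : 1 ≤ n)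
    (N M : ℕ) (hMn : n ≤ M) :
    |1 - (1 / ((M : ℝ) + 1)) *
        ∑ r ∈ Finset.Icc N (N + (M - n)),
          Real.sqrt (qBracket q (n + r + 1)) / Real.sqrt (qBracket q (r + 1))| ≤
      (n : ℝ) / ((M : ℝ) + 1) + (n : ℝ) / ((N : ℝ) + 1) :=
  statement16_general q hq0 hq1 n N M
end

section
/- Let q ∈ (0,1] and let k, n ∈ ℕ. For every ε > 0 there exist N₀, M₀ ∈ ℕ with M₀ ≥ k such that for all N ≥ N₀ and all M ≥ M₀ one has |(1/(M+1))·Σ_{i=N}^{N+M−k} √(⟨i+1⟩_q·⟨i+k+1⟩_q)/⟨i+k+n+1⟩_q − 1| < ε. In other words, (1/(M+1))·Σ_{i=N}^{N+M−k} √(⟨i+1⟩_q·⟨i+k+1⟩_q)/⟨i+k+n+1⟩_q converges to 1 as N and M tend to infinity. -/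
lemma qBracket_pos {q : ℝ} (hq : 0 < q) {m : ℕ} (hm : 0 < m) : 0 < qBracket q m :=
  Finset.sum_pos (fun i _ => pow_pos hq _) (Finset.nonempty_range_iff.mpr hm.ne')

lemma qBracket_mono_s17 {q : ℝ} (hq : 0 < q) {a b : ℕ} (h : a ≤ b) :
    qBracket q a ≤ qBracket q b :=
  Finset.sum_le_sum_of_subset_of_nonneg (Finset.range_subset_range.2 h)
    (fun i _ _ => (pow_pos hq _).le)

lemma qBracket_ge {q : ℝ} (hq0 : 0 < q) (hq1 : q ≤ 1) (i : ℕ) :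
    (i + 1 : ℝ) * q ^ (2 * i) ≤ qBracket q (i + 1) := by
  rw [qBracket]
  calc (i + 1 : ℝ) * q ^ (2 * i) = ∑ _j ∈ Finset.range (i + 1), q ^ (2 * i) := by
        rw [Finset.sum_const, Finset.card_range, nsmul_eq_mul]; push_cast; ring
    _ ≤ _ := Finset.sum_le_sum fun j hj =>
        pow_le_pow_of_le_one hq0.le hq1 (by
          have := Finset.mem_range.mp hj; omega)

lemma qBracket_add_le_s17 {q : ℝ} (hq0 : 0 < q) (hq1 : q ≤ 1) (i : ℕ) :
    ∀ r : ℕ, qBracket q (i + 1 + r) ≤ qBracket q (i + 1) + (r : ℝ) * q ^ (2 * i) := by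
  intro r
  induction r with
  | zero => simp
  | succ r ih =>
      have hstep : qBracket q (i + 1 + r + 1) = qBracket q (i + 1 + r) + q ^ (2 * (i + 1 + r)) := by
        rw [qBracket, qBracket, Finset.sum_range_succ]
      have hpow : q ^ (2 * (i + 1 + r)) ≤ q ^ (2 * i) :=
        pow_le_pow_of_le_one hq0.le hq1 (by omega)
      have : i + 1 + (r + 1) = i + 1 + r + 1 := by omega
      rw [this, hstep]
      push_cast
      linarith

/-- Each summand is at most 1. -/
lemma term_le_one {q : ℝ} (hq0 : 0 < q) (k n i : ℕ) :
    Real.sqrt (qBracket q (i + 1) * qBracket q (i + k + 1)) /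
      qBracket q (i + k + n + 1) ≤ 1 := by
  have hc : 0 < qBracket q (i + k + n + 1) := qBracket_pos hq0 (by omega)
  rw [div_le_one hc]
  have ha : qBracket q (i + 1) ≤ qBracket q (i + k + n + 1) := qBracket_mono_s17 hq0 (by omega)
  have hb : qBracket q (i + k + 1) ≤ qBracket q (i + k + n + 1) := qBracket_mono_s17 hq0 (by omega)
  have ha0 : 0 ≤ qBracket q (i + 1) := (qBracket_pos hq0 (by omega)).le
  have hb0 : 0 ≤ qBracket q (i + k + 1) := (qBracket_pos hq0 (by omega)).le
  calc Real.sqrt (qBracket q (i + 1) * qBracket q (i + k + 1))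
      ≤ Real.sqrt (qBracket q (i + k + n + 1) ^ 2) := by
        apply Real.sqrt_le_sqrt
        nlinarith
    _ = qBracket q (i + k + n + 1) := Real.sqrt_sq hc.le

/-- Each summand is at least `1 - (k+n)/(i+1)`. -/
lemma term_ge {q : ℝ} (hq0 : 0 < q) (hq1 : q ≤ 1) (k n i : ℕ) :
    1 - ((k : ℝ) + n) / (i + 1) ≤
      Real.sqrt (qBracket q (i + 1) * qBracket q (i + k + 1)) /
        qBracket q (i + k + n + 1) := by
  set a := qBracket q (i + 1) with ha_def
  set c := qBracket q (i + k + n + 1) with hc_def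
  have ha : 0 < a := qBracket_pos hq0 (by omega)
  have hc : 0 < c := qBracket_pos hq0 (by omega)
  have hac : a ≤ c := qBracket_mono_s17 hq0 (by omega)
  have hab : a ≤ qBracket q (i + k + 1) := qBracket_mono_s17 hq0 (by omega)
  -- sqrt(a*b) ≥ a
  have hsqrt : a ≤ Real.sqrt (a * qBracket q (i + k + 1)) := by
    have h := Real.sqrt_le_sqrt (mul_le_mul_of_nonneg_left hab ha.le)
    rwa [Real.sqrt_mul_self ha.le] at h
  -- c ≤ a + (k+n) * q^(2i) ≤ a * (1 + (k+n)/(i+1))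
  have hq2 : (i + 1 : ℝ) * q ^ (2 * i) ≤ a := qBracket_ge hq0 hq1 i
  have hcb : c ≤ a + ((k : ℝ) + n) * q ^ (2 * i) := by
    have := qBracket_add_le_s17 hq0 hq1 i (k + n)
    have heq : i + 1 + (k + n) = i + k + n + 1 := by omega
    rw [heq] at this
    rw [hc_def]
    push_cast at this ⊢
    linarith
  set d : ℝ := ((k : ℝ) + n) / (i + 1) with hd_def
  have hd0 : 0 ≤ d := by positivity
  have hi1 : (0 : ℝ) < (i : ℝ) + 1 := by positivity
  have hqa : q ^ (2 * i) ≤ a / ((i : ℝ) + 1) := by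
    rw [le_div_iff₀ hi1]; linarith
  have hcda : c ≤ a + d * a := by
    have hkn0 : (0 : ℝ) ≤ (k : ℝ) + n := by positivity
    have : ((k : ℝ) + n) * q ^ (2 * i) ≤ ((k : ℝ) + n) * (a / ((i : ℝ) + 1)) :=
      mul_le_mul_of_nonneg_left hqa hkn0
    have heq : ((k : ℝ) + n) * (a / ((i : ℝ) + 1)) = d * a := by
      rw [hd_def]; ring
    linarith
  -- (1 - d) * c ≤ a
  have hkey : (1 - d) * c ≤ a := by
    have hda : d * a ≤ d * c := mul_le_mul_of_nonneg_left hac hd0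
    nlinarith
  have h1 : (1 : ℝ) - d ≤ a / c := by
    rw [le_div_iff₀ hc]; linarith
  calc (1 : ℝ) - d ≤ a / c := h1
    _ ≤ Real.sqrt (a * qBracket q (i + k + 1)) / c := by gcongr

/-- For `q ∈ (0,1]` and `k, n ∈ ℕ`, the averages
`(1/(M+1))·Σ_{i=N}^{N+M−k} √(⟨i+1⟩_q·⟨i+k+1⟩_q)/⟨i+k+n+1⟩_q` converge to `1` as `N` and `M`
tend to infinity. -/
theorem statement17 (q : ℝ) (hq0 : 0 < q) (hq1 : q ≤ 1) (k n : ℕ) :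
    ∀ ε : ℝ, 0 < ε → ∃ N₀ M₀ : ℕ, k ≤ M₀ ∧
      ∀ N, N₀ ≤ N → ∀ M, M₀ ≤ M →
        |(1 / ((M : ℝ) + 1)) *
            (∑ i ∈ Finset.Icc N (N + (M - k)),
              Real.sqrt (qBracket q (i + 1) * qBracket q (i + k + 1)) /
                qBracket q (i + k + n + 1)) - 1| < ε := by
  intro ε hε
  refine ⟨⌈2 * ((k : ℝ) + n) / ε⌉₊, max k ⌈2 * (k : ℝ) / ε⌉₊, le_max_left _ _, ?_⟩
  intro N hN M hM
  have hkM : k ≤ M := le_trans (le_max_left _ _) hM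
  set m := M - k with hm_def
  have hmM : (m : ℝ) + 1 = (M : ℝ) + 1 - k := by
    have : m + k = M := by omega
    push_cast [← this]; ring
  set P : ℝ := (M : ℝ) + 1 with hP_def
  have hP : 0 < P := by positivity
  set S := ∑ i ∈ Finset.Icc N (N + m),
      Real.sqrt (qBracket q (i + 1) * qBracket q (i + k + 1)) /
        qBracket q (i + k + n + 1) with hS_def
  have hcard : (Finset.Icc N (N + m)).card = m + 1 := by
    rw [Nat.card_Icc]; omega
  -- lower bound per term
  have hN0 : ∀ i ∈ Finset.Icc N (N + m), 1 - ε / 2 ≤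
      Real.sqrt (qBracket q (i + 1) * qBracket q (i + k + 1)) /
        qBracket q (i + k + n + 1) := by
    intro i hi
    have hiN : N ≤ i := (Finset.mem_Icc.mp hi).1
    have hterm := term_ge hq0 hq1 k n i
    have hceil : (2 * ((k : ℝ) + n) / ε) ≤ (N : ℝ) := by
      calc (2 * ((k : ℝ) + n) / ε) ≤ (⌈2 * ((k : ℝ) + n) / ε⌉₊ : ℝ) := Nat.le_ceil _
        _ ≤ (N : ℝ) := by exact_mod_cast Nat.cast_le.mpr hN
    have hi1 : (0 : ℝ) < (i : ℝ) + 1 := by positivity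
    have hdi : ((k : ℝ) + n) / ((i : ℝ) + 1) ≤ ε / 2 := by
      rw [div_le_iff₀ hi1]
      have hNi : (N : ℝ) ≤ (i : ℝ) := by exact_mod_cast hiN
      have h2 : 2 * ((k : ℝ) + n) ≤ ε * (N : ℝ) := by
        rw [div_le_iff₀ hε] at hceil; linarith
      nlinarith
    linarith
  have hSlow : ((m : ℝ) + 1) * (1 - ε / 2) ≤ S := by
    have := Finset.card_nsmul_le_sum (Finset.Icc N (N + m)) _ (1 - ε / 2) hN0
    rw [hcard, nsmul_eq_mul, Nat.cast_add, Nat.cast_one, ← hS_def] at this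
    linarith
  have hSup : S ≤ (m : ℝ) + 1 := by
    have := Finset.sum_le_card_nsmul (Finset.Icc N (N + m)) _ 1
      (fun i _ => term_le_one hq0 k n i)
    rwa [hcard, nsmul_eq_mul, Nat.cast_add, Nat.cast_one, mul_one] at this
  -- k/(M+1) < ε/2
  have hkP : (k : ℝ) < ε / 2 * P := by
    have hM2 : ⌈2 * (k : ℝ) / ε⌉₊ ≤ M := le_trans (le_max_right _ _) hM
    have h1 : 2 * (k : ℝ) / ε ≤ (M : ℝ) := by
      calc 2 * (k : ℝ) / ε ≤ (⌈2 * (k : ℝ) / ε⌉₊ : ℝ) := Nat.le_ceil _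
        _ ≤ (M : ℝ) := by exact_mod_cast hM2
    rw [div_le_iff₀ hε] at h1
    have : 2 * (k : ℝ) < ε * P := by rw [hP_def]; nlinarith
    linarith
  rw [abs_lt]
  constructor
  · -- lower : -ε < S/P - 1
    have hmk : (m : ℝ) + 1 = P - k := by rw [hP_def]; linarith [hmM]
    rw [hmk] at hSlow
    have : (1 - ε) * P < S := by nlinarith
    have hgoal : 1 - ε < 1 / P * S := by
      rw [one_div, inv_mul_eq_div, lt_div_iff₀ hP]; linarith
    linarith
  · -- upper : S/P - 1 < ε
    have hSP : S ≤ P := by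
      rw [hmM] at hSup
      have : (0 : ℝ) ≤ k := by positivity
      rw [hP_def]; linarith
    have : 1 / P * S ≤ 1 := by
      rw [one_div, inv_mul_eq_div, div_le_one hP]; exact hSP
    linarith
end
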